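/- arXiv:1509.07457 — 8 statements merged into one kernel-verified Lean document; each statement's English description precedes it below -/
import Mathlib

section
/- For a finite connected simple graph G with at least 2 vertices, the dimension of the discrete Morse complex 𝔐(G) equals |V_G| − 2. Equivalently, the maximum size of an acyclic matching on the Hasse diagram of G is |V_G| − 1. -/
/-- `S` is a simplex of the discrete Morse complex `𝔐(G)` of the simple graph `G`
(equivalently, an acyclic matching on the Hasse diagram of `G`): a set of oriented
edges such that no two have the same source vertex and containing no directed cycle. -/
def IsMorseSimplex {V : Type*} (G : SimpleGraph V) (S : Finset (V × V)) : Prop :=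
  (∀ p ∈ S, G.Adj p.1 p.2) ∧
  (∀ p ∈ S, ∀ q ∈ S, p.1 = q.1 → p = q) ∧
  (∀ v : V, ¬ Relation.TransGen (fun a b => (a, b) ∈ S) v v)

/-!
Matching each vertex `v ≠ r` with an edge towards a neighbour closer to a root `r` gives an
acyclic matching of size `|V| - 1`, since graph distance to `r` strictly decreases along it.
Conversely, an acyclic matching of size `|V|` would give every vertex an outgoing edge, and
following outgoing edges in a finite graph must close a directed cycle.
-/

namespace Relation

theorem not_transGen_self_of_lt {α β : Type*} [Preorder β] {r : α → α → Prop} (φ : α → β)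
    (hφ : ∀ a b, r a b → φ b < φ a) (a : α) : ¬ TransGen r a a := fun h =>
  lt_irrefl (φ a) <| by
    simpa only [transGen_eq_self] using h.lift φ (p := fun x y => y < x) hφ

theorem exists_transGen_self_of_forall_exists {α : Type*} [Finite α] [Nonempty α]
    {r : α → α → Prop} (hr : ∀ a, ∃ b, r a b) : ∃ a, TransGen r a a := by
  by_contra! hacyclic
  let reached : α → α → Prop := fun a b => TransGen r b a
  have : IsTrans α reached := ⟨fun _ _ _ hab hbc => hbc.trans hab⟩
  have : Std.Irrefl reached := ⟨hacyclic⟩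
  obtain ⟨m, -, hm⟩ :=
    (Finite.wellFounded_of_trans_of_irrefl reached).has_min Set.univ Set.univ_nonempty
  obtain ⟨b, hmb⟩ := hr m
  exact hm b (Set.mem_univ b) (TransGen.single hmb)

end Relation

namespace SimpleGraph

theorem Reachable.exists_adj_dist_lt {V : Type*} {G : SimpleGraph V} {u v : V}
    (h : G.Reachable u v) (huv : u ≠ v) : ∃ w, G.Adj u w ∧ G.dist w v < G.dist u v := by
  obtain ⟨p, hp⟩ := h.exists_walk_length_eq_dist
  cases p with
  | nil => exact absurd rfl huv
  | cons hadj q =>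
    refine ⟨_, hadj, ?_⟩
    have := dist_le q
    rw [Walk.length_cons] at hp
    omega

end SimpleGraph

section MorseSimplex

variable {V : Type*} {G : SimpleGraph V}

theorem isMorseSimplex_image_of_lt {β : Type*} [DecidableEq V] [Preorder β] (s : Finset V)
    (f : V → V) (φ : V → β) (hadj : ∀ v ∈ s, G.Adj v (f v)) (hφ : ∀ v ∈ s, φ (f v) < φ v) :
    IsMorseSimplex G (s.image fun v => (v, f v)) := by
  simp only [IsMorseSimplex, Finset.mem_image]
  refine ⟨?_, ?_, Relation.not_transGen_self_of_lt φ ?_⟩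
  · rintro _ ⟨v, hv, rfl⟩
    exact hadj v hv
  · rintro _ ⟨v, -, rfl⟩ _ ⟨w, -, rfl⟩ (rfl : v = w)
    rfl
  · rintro a b ⟨v, hv, hvab⟩
    obtain ⟨rfl, rfl⟩ := Prod.mk.inj hvab
    exact hφ v hv

theorem IsMorseSimplex.card_lt [Fintype V] [Nonempty V] {S : Finset (V × V)}
    (hS : IsMorseSimplex G S) : S.card < Fintype.card V := by
  classical
  obtain ⟨-, hsource, hacyclic⟩ := hS
  by_contra! hcard
  have hsources : S.image Prod.fst = Finset.univ := by
    refine Finset.eq_univ_of_card _ (le_antisymm (Finset.card_le_univ _) ?_)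
    rwa [Finset.card_image_of_injOn fun p hp q hq => hsource p hp q hq]
  have hout : ∀ v, ∃ w, (v, w) ∈ S := fun v => by
    obtain ⟨p, hp, rfl⟩ := Finset.mem_image.mp (hsources ▸ Finset.mem_univ v)
    exact ⟨p.2, hp⟩
  obtain ⟨v, hv⟩ := Relation.exists_transGen_self_of_forall_exists hout
  exact hacyclic v hv

theorem SimpleGraph.Connected.exists_isMorseSimplex_card [Fintype V] (hG : G.Connected) :
    ∃ S, IsMorseSimplex G S ∧ S.card = Fintype.card V - 1 := by
  classical
  obtain ⟨r⟩ := hG.nonempty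
  choose! parent hparent using fun v (hv : v ≠ r) => (hG v r).exists_adj_dist_lt hv
  refine ⟨_, isMorseSimplex_image_of_lt (Finset.univ.erase r) parent (G.dist · r)
    (fun v hv => (hparent v (Finset.ne_of_mem_erase hv)).1)
    (fun v hv => (hparent v (Finset.ne_of_mem_erase hv)).2), ?_⟩
  rw [Finset.card_image_of_injective _ fun v w h => (Prod.mk.inj h).1,
    Finset.card_erase_of_mem (Finset.mem_univ r), Finset.card_univ]

end MorseSimplex

theorem stmt_1_general {V : Type*} [Fintype V] (G : SimpleGraph V)
    (hG : G.Connected) :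
    IsGreatest {n : ℕ | ∃ S : Finset (V × V), IsMorseSimplex G S ∧ S.card = n}
      (Fintype.card V - 1) := by
  have := hG.nonempty
  refine ⟨hG.exists_isMorseSimplex_card, ?_⟩
  rintro _ ⟨S, hS, rfl⟩
  have := hS.card_lt
  omega

/-- For a finite connected simple graph `G` with at least two vertices, the maximal
cardinality of a simplex of the discrete Morse complex (an acyclic matching) is
`|V_G| - 1`; that is, `dim 𝔐(G) = |V_G| - 2`. -/
theorem stmt_1 {V : Type*} [Fintype V] [DecidableEq V] (G : SimpleGraph V)
    (hG : G.Connected) (h2 : 2 ≤ Fintype.card V) :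
    IsGreatest {n : ℕ | ∃ S : Finset (V × V), IsMorseSimplex G S ∧ S.card = n}
      (Fintype.card V - 1) :=
  stmt_1_general G hG
end

section
/- If G and G' are finite connected simple graphs whose discrete Morse complexes 𝔐(G) and 𝔐(G') are isomorphic as simplicial complexes, then |V_G| = |V_{G'}| and |E_G| = |E_{G'}|. -/
/-- The vertices of the discrete Morse complex of `G`: the oriented edges of `G`. -/
abbrev OrientedEdge {V : Type*} (G : SimpleGraph V) : Type _ := {p : V × V // G.Adj p.1 p.2}

/-- `𝔐(G)` and `𝔐(G')` are isomorphic simplicial complexes: there is a bijection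
between their vertex sets carrying simplices to simplices in both directions. -/
def MorseEquiv {V W : Type*} [DecidableEq V] [DecidableEq W]
    (G : SimpleGraph V) (G' : SimpleGraph W) : Prop :=
  ∃ F : OrientedEdge G ≃ OrientedEdge G',
    ∀ S : Finset (OrientedEdge G),
      IsMorseSimplex G (S.image Subtype.val) ↔
        IsMorseSimplex G' ((S.image F).image Subtype.val)

open Finset Relation

lemma exists_forall_not_of_forall_not_transGen_self {V : Type*} [Finite V] [Nonempty V]
    {R : V → V → Prop} (h : ∀ v, ¬ TransGen R v v) : ∃ v, ∀ w, ¬ R v w := by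
  have : IsTrans V (flip (TransGen R)) := ⟨fun _ _ _ hab hbc => hbc.trans hab⟩
  have : Std.Irrefl (flip (TransGen R)) := ⟨h⟩
  obtain ⟨m, -, hm⟩ := (Finite.wellFounded_of_trans_of_irrefl (flip (TransGen R))).has_min
    Set.univ Set.univ_nonempty
  exact ⟨m, fun w hw => hm w trivial (TransGen.single hw)⟩

section

variable {V W : Type*} {G : SimpleGraph V} {G' : SimpleGraph W}

lemma IsMorseSimplex.card_le [Fintype V] [Nonempty V] {T : Finset (V × V)}
    (hT : IsMorseSimplex G T) : #T ≤ Fintype.card V - 1 := by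
  classical
  obtain ⟨s, hs⟩ := exists_forall_not_of_forall_not_transGen_self hT.2.2
  calc #T = #(T.image Prod.fst) := (card_image_of_injOn fun p hp q hq => hT.2.1 p hp q hq).symm
    _ ≤ #(univ.erase s) := card_le_card fun v hv => by
        obtain ⟨p, hp, rfl⟩ := mem_image.mp hv
        exact mem_erase.mpr ⟨fun hps => hs p.2 (hps ▸ hp), mem_univ _⟩
    _ = Fintype.card V - 1 := by rw [card_erase_of_mem (mem_univ s), card_univ]

lemma SimpleGraph.Connected.exists_adj_dist_lt (hG : G.Connected) {r v : V} (hv : v ≠ r) :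
    ∃ w, G.Adj v w ∧ G.dist w r < G.dist v r := by
  obtain ⟨p, hp⟩ := hG.exists_walk_length_eq_dist v r
  cases p with
  | nil => exact absurd rfl hv
  | cons hadj q =>
    refine ⟨_, hadj, ?_⟩
    have := SimpleGraph.dist_le q
    rw [SimpleGraph.Walk.length_cons] at hp
    omega

lemma SimpleGraph.Connected.exists_isMorseSimplex_card_eq [Fintype V] [DecidableEq V]
    (hG : G.Connected) : ∃ T, IsMorseSimplex G T ∧ #T = Fintype.card V - 1 := by
  obtain ⟨r⟩ := hG.nonempty
  choose! f hadj hdist using fun v (hv : v ≠ r) => hG.exists_adj_dist_lt hv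
  set T := (univ.erase r).image fun v => (v, f v)
  have hmem : ∀ a b, (a, b) ∈ T ↔ a ≠ r ∧ b = f a := by
    intro a b
    simp only [T, mem_image, mem_erase, mem_univ, and_true, Prod.mk.injEq]
    constructor
    · rintro ⟨v, hv, rfl, rfl⟩
      exact ⟨hv, rfl⟩
    · rintro ⟨ha, rfl⟩
      exact ⟨a, ha, rfl, rfl⟩
  refine ⟨T, ⟨fun p hp => ?_, fun p hp q hq hpq => ?_, fun v hv => ?_⟩, ?_⟩
  · obtain ⟨hp1, hp2⟩ := (hmem p.1 p.2).mp hp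
    exact hp2 ▸ hadj _ hp1
  · rw [Prod.ext_iff, ((hmem p.1 p.2).mp hp).2, ((hmem q.1 q.2).mp hq).2, hpq]
    exact ⟨rfl, rfl⟩
  · have hlt := hv.lift (fun v => G.dist v r) (p := (· > ·)) fun a b hab => by
      obtain ⟨ha, rfl⟩ := (hmem a b).mp hab
      exact hdist a ha
    rw [transGen_eq_self] at hlt
    exact lt_irrefl _ hlt
  · rw [card_image_of_injective _ fun a b hab => (Prod.ext_iff.mp hab).1,
      card_erase_of_mem (mem_univ r), card_univ]

lemma card_orientedEdge [Fintype V] [DecidableRel G.Adj] :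
    Fintype.card (OrientedEdge G) = 2 * #G.edgeFinset := by
  rw [← G.dart_card_eq_twice_card_edges]
  exact Fintype.card_congr
    ⟨fun p => ⟨p.1, p.2⟩, fun d => ⟨d.toProd, d.adj⟩, fun _ => rfl, fun _ => rfl⟩

namespace MorseEquiv

variable [DecidableEq V] [DecidableEq W]

lemma symm (h : MorseEquiv G G') : MorseEquiv G' G := by
  obtain ⟨F, hF⟩ := h
  refine ⟨F.symm, fun S => ?_⟩
  rw [hF, image_image (g := F), F.self_comp_symm, image_id]

lemma card_sub_one_le [Fintype V] [Fintype W] [Nonempty W] (h : MorseEquiv G G')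
    (hG : G.Connected) : Fintype.card V - 1 ≤ Fintype.card W - 1 := by
  classical
  obtain ⟨F, hF⟩ := h
  obtain ⟨T, hT, hcard⟩ := hG.exists_isMorseSimplex_card_eq
  set S : Finset (OrientedEdge G) := T.subtype fun p => G.Adj p.1 p.2
  have hST : S.image Subtype.val = T :=
    (map_eq_image (Function.Embedding.subtype _) S).symm.trans (subtype_map_of_mem hT.1)
  have hle := ((hF S).mp (hST ▸ hT)).card_le
  rwa [card_image_of_injective _ Subtype.val_injective, card_image_of_injective _ F.injective,
    ← card_image_of_injective _ Subtype.val_injective, hST, hcard] at hle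

end MorseEquiv

end

/-- If two finite connected simple graphs have isomorphic discrete Morse complexes,
then they have the same number of vertices and the same number of edges. -/
theorem stmt_3 {V W : Type*} [Fintype V] [DecidableEq V] [Fintype W] [DecidableEq W]
    (G : SimpleGraph V) (G' : SimpleGraph W) [DecidableRel G.Adj] [DecidableRel G'.Adj]
    (hG : G.Connected) (hG' : G'.Connected) (h : MorseEquiv G G') :
    Fintype.card V = Fintype.card W ∧ G.edgeFinset.card = G'.edgeFinset.card := by
  have := hG.nonempty
  have := hG'.nonempty
  have hVW := h.card_sub_one_le hG
  have hWV := h.symm.card_sub_one_le hG'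
  obtain ⟨F, -⟩ := h
  have hdarts := Fintype.card_congr F
  rw [card_orientedEdge, card_orientedEdge] at hdarts
  have := Fintype.card_pos (α := V)
  have := Fintype.card_pos (α := W)
  omega
end

section
/- Let G be a finite connected simple graph with at least 2 edges. A vertex v of G incident to edge e is a leaf (degree 1) if and only if the vertex (v,e) of 𝔐(G) is compatible (forms an edge of 𝔐(G)) with every other vertex of 𝔐(G) except (w,e), where w is the other endpoint of e. Equivalently, v is a leaf iff the degree of (v,e) in the 1-skeleton of 𝔐(G) equals 2|E_G| − 2. -/
/-!
Whether two oriented edges `(v, w)` and `p` span an edge of `𝔐(G)` is a local question: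
they must have different sources and must not form the 2-cycle `{(v, w), (w, v)}`; any
other pair of oriented edges is acyclic, as a height function strictly decreasing along
both edges shows. Hence `(v, w)` is compatible with every other oriented edge except
`(w, v)` iff `v` has no neighbour besides `w`, and the number of oriented edges compatible
with `(v, w)` is `2|E| - deg v - 1`, which equals `2|E| - 2` iff `deg v = 1`.
-/

section

open Finset Relation

theorem Relation.not_transGen_self_of_forall_lt {α β : Type*} [Preorder β]
    {r : α → α → Prop} (f : α → β) (hf : ∀ a b, r a b → f b < f a) (a : α) :
    ¬ TransGen r a a := by
  suffices ∀ {b}, TransGen r a b → f b < f a from fun h => lt_irrefl _ (this h)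
  intro b h
  induction h with
  | single h => exact hf _ _ h
  | tail _ h ih => exact (hf _ _ h).trans ih

theorem not_transGen_self_pair {V : Type*} [DecidableEq V] {v w a b : V}
    (hvw : v ≠ w) (hab : a ≠ b) (hva : v ≠ a) (hrev : ¬(a = w ∧ b = v)) (x : V) :
    ¬ TransGen (fun s t => (s, t) ∈ ({(v, w), (a, b)} : Finset (V × V))) x x := by
  -- the length of the longest path of `{v → w, a → b}` starting at `y`
  let height : V → ℕ := fun y =>
    if y = v then (if w = a then 2 else 1) else if y = a then (if b = v then 2 else 1) else 0
  refine not_transGen_self_of_forall_lt height (fun s t hst => ?_) x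
  simp only [mem_insert, mem_singleton, Prod.mk.injEq] at hst
  rcases hst with ⟨rfl, rfl⟩ | ⟨rfl, rfl⟩ <;> grind

variable {V : Type*} (G : SimpleGraph V)

theorem isMorseSimplex_pair_iff [DecidableEq V] {v w : V} (hvw : G.Adj v w) {p : V × V}
    (hp : G.Adj p.1 p.2) (hne : p ≠ (v, w)) :
    IsMorseSimplex G {(v, w), p} ↔ p.1 ≠ v ∧ p ≠ (w, v) := by
  obtain ⟨a, b⟩ := p
  constructor
  · rintro ⟨-, hsrc, hcyc⟩
    refine ⟨fun h => hne (hsrc _ (by simp) _ (by simp) h), ?_⟩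
    rintro ⟨⟩
    exact hcyc v (.tail (.single (b := w) (by simp)) (by simp))
  · rintro ⟨hav, hrev⟩
    refine ⟨?_, ?_, not_transGen_self_pair hvw.ne hp.ne (Ne.symm hav) (by grind)⟩
    · simp only [mem_insert, mem_singleton]
      rintro q (rfl | rfl)
      exacts [hvw, hp]
    · simp only [mem_insert, mem_singleton]
      rintro q (rfl | rfl) r (rfl | rfl) h <;> grind

theorem degree_eq_one_iff_forall_adj_eq [Fintype V] [DecidableRel G.Adj] {v w : V}
    (hvw : G.Adj v w) : G.degree v = 1 ↔ ∀ u, G.Adj v u → u = w := by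
  rw [SimpleGraph.degree_eq_one_iff_existsUnique_adj]
  exact ⟨fun ⟨_, _, h⟩ u hu => (h u hu).trans (h w hvw).symm, fun h => ⟨w, hvw, h⟩⟩

theorem card_filter_adj_fst_ne [Fintype V] [DecidableEq V] [DecidableRel G.Adj] (v : V) :
    #{p : V × V | G.Adj p.1 p.2 ∧ p.1 ≠ v} = 2 * #G.edgeFinset - G.degree v := by
  have hdarts : ({p : V × V | G.Adj p.1 p.2 ∧ p.1 ≠ v} : Finset _) =
      ({d : G.Dart | d.fst ≠ v} : Finset _).map ⟨_, SimpleGraph.Dart.toProd_injective⟩ := by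
    ext ⟨a, b⟩
    simp only [mem_filter, mem_univ, true_and, mem_map, Function.Embedding.coeFn_mk]
    refine ⟨fun ⟨h, ha⟩ => ⟨⟨(a, b), h⟩, ha, rfl⟩, ?_⟩
    rintro ⟨⟨_, h⟩, hd, ⟨⟩⟩
    exact ⟨h, hd⟩
  have hsplit := card_filter_add_card_filter_not (s := univ) (fun d : G.Dart => d.fst = v)
  rw [hdarts, card_map, ← G.dart_card_eq_twice_card_edges, ← G.dart_fst_fiber_card_eq_degree,
    ← card_univ, ← hsplit]
  simp only [ne_eq, add_tsub_cancel_left]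

theorem setOf_isMorseSimplex_pair_eq [Fintype V] [DecidableEq V] [DecidableRel G.Adj]
    {v w : V} (hvw : G.Adj v w) :
    {p : V × V | G.Adj p.1 p.2 ∧ p ≠ (v, w) ∧ IsMorseSimplex G {(v, w), p}} =
      ↑((univ.filter fun p : V × V => G.Adj p.1 p.2 ∧ p.1 ≠ v).erase (w, v)) := by
  ext p
  simp only [Set.mem_ofPred_eq, coe_erase, Set.mem_sdiff, mem_coe, mem_filter, mem_univ,
    true_and, Set.mem_singleton_iff]
  refine ⟨fun ⟨hp, hne, hm⟩ => ?_, fun ⟨⟨hp, hv⟩, hrev⟩ => ?_⟩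
  · have := (isMorseSimplex_pair_iff G hvw hp hne).1 hm
    exact ⟨⟨hp, this.1⟩, this.2⟩
  · have hne : p ≠ (v, w) := fun h => hv (by rw [h])
    exact ⟨hp, hne, (isMorseSimplex_pair_iff G hvw hp hne).2 ⟨hv, hrev⟩⟩

theorem degree_add_degree_le [Fintype V] [DecidableEq V] [DecidableRel G.Adj] {v w : V}
    (hvw : v ≠ w) :
    G.degree v + G.degree w ≤ 2 * #G.edgeFinset := by
  rw [← G.sum_degrees_eq_twice_card_edges]
  simpa [sum_pair hvw] using sum_le_sum_of_subset (f := fun x => G.degree x) (subset_univ {v, w})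

end

theorem stmt_4_general {V : Type*} [Fintype V] [DecidableEq V] (G : SimpleGraph V)
    [DecidableRel G.Adj] (v w : V) (hvw : G.Adj v w) :
    (G.degree v = 1 ↔
      ∀ p : V × V, G.Adj p.1 p.2 → p ≠ (v, w) → p ≠ (w, v) →
        IsMorseSimplex G {(v, w), p}) ∧
    (G.degree v = 1 ↔
      {p : V × V | G.Adj p.1 p.2 ∧ p ≠ (v, w) ∧ IsMorseSimplex G {(v, w), p}}.ncard =
        2 * G.edgeFinset.card - 2) := by
  refine ⟨?_, ?_⟩
  · rw [degree_eq_one_iff_forall_adj_eq G hvw]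
    refine ⟨fun h p hp hne hrev => ?_, fun h u hu => ?_⟩
    · rw [isMorseSimplex_pair_iff G hvw hp hne]
      exact ⟨fun hv => hne (Prod.ext hv (h _ (hv ▸ hp))), hrev⟩
    · by_contra huw
      have hne : (v, u) ≠ (v, w) := by simp [huw]
      exact ((isMorseSimplex_pair_iff G hvw hu hne).1 (h _ hu hne (by simp [hvw.ne]))).1 rfl
  · rw [setOf_isMorseSimplex_pair_eq G hvw, Set.ncard_coe_finset,
      Finset.card_erase_of_mem (by simp [hvw.symm, hvw.ne.symm]), card_filter_adj_fst_ne]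
    have hsum := degree_add_degree_le G hvw.ne
    have hw := (G.degree_pos_iff_exists_adj w).2 ⟨v, hvw.symm⟩
    omega

/-- Let `G` be a finite connected simple graph with at least two edges, and let `e = vw`
be an edge of `G`.  Then `v` is a leaf of `G` if and only if the vertex `(v,e)` of
`𝔐(G)` is compatible with every vertex of `𝔐(G)` other than itself and `(w,e)`;
equivalently, iff the degree of `(v,e)` in the 1-skeleton of `𝔐(G)` is `2|E_G| - 2`. -/
theorem stmt_4 {V : Type*} [Fintype V] [DecidableEq V] (G : SimpleGraph V)
    [DecidableRel G.Adj] (hG : G.Connected) (h2 : 2 ≤ G.edgeFinset.card)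
    (v w : V) (hvw : G.Adj v w) :
    (G.degree v = 1 ↔
      ∀ p : V × V, G.Adj p.1 p.2 → p ≠ (v, w) → p ≠ (w, v) →
        IsMorseSimplex G {(v, w), p}) ∧
    (G.degree v = 1 ↔
      {p : V × V | G.Adj p.1 p.2 ∧ p ≠ (v, w) ∧ IsMorseSimplex G {(v, w), p}}.ncard =
        2 * G.edgeFinset.card - 2) :=
  stmt_4_general G v w hvw
end

section
/- If G and G' are finite connected simple graphs with isomorphic discrete Morse complexes, and G is a cycle C_n, then G' is also isomorphic to C_n. -/
/-! In `𝔐(G)` two distinct oriented edges span an edge unless they share their source or are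
reverse to each other. So the oriented edges not adjacent to `e` in the 1-skeleton are the other
edges leaving the source of `e` together with the reverse of `e`: there are `deg (source e)` of
them, and an isomorphism `𝔐(G) ≅ 𝔐(G')` preserves source degrees. Hence a connected `G'` with
`𝔐(G') ≅ 𝔐(C_n)` is 2-regular, and counting oriented edges gives it `n` vertices. A connected
2-regular graph is Hamiltonian; its Hamiltonian cycle is a copy of `C_n` on all `n` vertices, and
such a copy is an isomorphism because both graphs are 2-regular. -/

open Finset Relation

theorem transGen_pair_cases {α : Type*} [DecidableEq α] {p q : α × α} (hpq : q ≠ p.swap)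
    {x y : α} (h : TransGen (fun a b => (a, b) ∈ ({p, q} : Finset (α × α))) x y) :
    (x, y) = p ∨ (x, y) = q ∨ (p.2 = q.1 ∧ (x, y) = (p.1, q.2)) ∨
      (q.2 = p.1 ∧ (x, y) = (q.1, p.2)) := by
  obtain ⟨p1, p2⟩ := p
  obtain ⟨q1, q2⟩ := q
  induction h with
  | single h => simp only [mem_insert, mem_singleton] at h; tauto
  | tail _ h ih =>
    simp only [mem_insert, mem_singleton, Prod.mk.injEq, Prod.swap_prod_mk, ne_eq] at *
    grind

theorem not_transGen_pair_self {α : Type*} [DecidableEq α] {p q : α × α} (hp : p.1 ≠ p.2)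
    (hq : q.1 ≠ q.2) (hpq : q ≠ p.swap) (v : α) :
    ¬ TransGen (fun a b => (a, b) ∈ ({p, q} : Finset (α × α))) v v := by
  intro h
  obtain ⟨p1, p2⟩ := p
  obtain ⟨q1, q2⟩ := q
  have := transGen_pair_cases hpq h
  simp only [Prod.mk.injEq, Prod.swap_prod_mk, ne_eq] at *
  grind

namespace SimpleGraph

variable {V : Type*} {G : SimpleGraph V}

theorem cycleGraph_degree_eq_two {n : ℕ} (hn : 3 ≤ n) (v : Fin n) :
    (cycleGraph n).degree v = 2 := by
  obtain ⟨k, rfl⟩ : ∃ k, n = k + 3 := ⟨n - 3, by omega⟩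
  exact cycleGraph_degree_three_le

theorem isCycles_of_degree_eq_two [Fintype V] [DecidableRel G.Adj]
    (hdeg : ∀ v, G.degree v = 2) : G.IsCycles := fun v _ => by
  rw [Set.ncard_eq_toFinset_card', ← neighborFinset_def, card_neighborFinset_eq_degree, hdeg]

theorem Connected.exists_isHamiltonianCycle [Finite V] [DecidableEq V] (hconn : G.Connected)
    (hcyc : G.IsCycles) {v : V} (hv : (G.neighborSet v).Nonempty) :
    ∃ p : G.Walk v v, p.IsHamiltonianCycle := by
  obtain ⟨p, hp, hverts⟩ := hcyc.exists_cycle_toSubgraph_verts_eq_connectedComponentSupp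
    (c := G.connectedComponentMk v) rfl hv
  refine ⟨p, hp, hp.isPath_tail.isHamiltonian_of_mem fun w => ?_⟩
  have hw : w ∈ p.support := by
    rw [← Walk.mem_verts_toSubgraph, hverts, ConnectedComponent.mem_supp_iff,
      ConnectedComponent.eq]
    exact hconn.preconnected w v
  rw [Walk.support_tail_of_not_nil _ hp.not_nil]
  rcases p.mem_support_iff.mp hw with rfl | hw
  · exact p.end_mem_tail_support hp.not_nil
  · exact hw

theorem Copy.nonempty_iso_of_card_eq_of_degree_le {W : Type*} {G' : SimpleGraph W} [Fintype V]
    [Fintype W] [DecidableRel G.Adj] [DecidableRel G'.Adj] (f : Copy G G')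
    (hcard : Fintype.card V = Fintype.card W) (hdeg : ∀ v, G'.degree (f v) ≤ G.degree v) :
    Nonempty (G ≃g G') := by
  classical
  have hinj : Function.Injective f := f.injective
  have hbij : Function.Bijective f :=
    (Fintype.bijective_iff_injective_and_card f).mpr ⟨hinj, hcard⟩
  have hnbr : ∀ v, G'.neighborFinset (f v) = (G.neighborFinset v).image f := fun v =>
    (eq_of_subset_of_card_le (fun w hw => by
      obtain ⟨u, hu, rfl⟩ := mem_image.mp hw
      simpa using f.toHom.map_adj (by simpa using hu))
      (by rw [card_image_of_injective _ hinj, card_neighborFinset_eq_degree,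
        card_neighborFinset_eq_degree]; exact hdeg v)).symm
  refine ⟨⟨Equiv.ofBijective f hbij, fun {u v} => ⟨fun h => ?_, f.toHom.map_adj⟩⟩⟩
  have : f v ∈ G'.neighborFinset (f u) := by simpa using h
  obtain ⟨w, hw, hwv⟩ := mem_image.mp (hnbr u ▸ this)
  rw [hinj hwv] at hw
  simpa using hw

theorem Connected.nonempty_iso_cycleGraph [Fintype V] [DecidableRel G.Adj] {n : ℕ}
    (hconn : G.Connected) (hn : 3 ≤ n) (hcard : Fintype.card V = n)
    (hdeg : ∀ v, G.degree v = 2) : Nonempty (G ≃g cycleGraph n) := by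
  classical
  obtain ⟨v⟩ : Nonempty V := Fintype.card_pos_iff.mp (by omega)
  have hv : (G.neighborSet v).Nonempty :=
    (G.degree_pos_iff_exists_adj v).mp (by rw [hdeg]; omega)
  obtain ⟨p, hp⟩ := hconn.exists_isHamiltonianCycle (isCycles_of_degree_eq_two hdeg) hv
  obtain ⟨f⟩ := (cycleGraph_isContained_iff (G := G) (n := n) (by omega)).mpr
    ⟨v, p, hp.isCycle, hp.length_eq.trans hcard⟩
  obtain ⟨φ⟩ := f.nonempty_iso_of_card_eq_of_degree_le (by simp [hcard])
    (fun u => by rw [hdeg, cycleGraph_degree_eq_two hn])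
  exact ⟨φ.symm⟩

end SimpleGraph

section MorseComplex

variable {V : Type*} {G : SimpleGraph V}

def OrientedEdge.reverse (e : OrientedEdge G) : OrientedEdge G := ⟨e.1.swap, e.2.symm⟩

def orientedEdgeEquivDart (G : SimpleGraph V) : OrientedEdge G ≃ G.Dart where
  toFun e := ⟨e.1, e.2⟩
  invFun d := ⟨d.toProd, d.adj⟩

theorem card_orientedEdge_s5 [Fintype V] (G : SimpleGraph V) [DecidableRel G.Adj] :
    Nat.card (OrientedEdge G) = ∑ v, G.degree v := by
  rw [Nat.card_congr (orientedEdgeEquivDart G), Nat.card_eq_fintype_card,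
    SimpleGraph.dart_card_eq_sum_degrees]

variable [DecidableEq V]

theorem isMorseSimplex_singleton {p : V × V} (hp : G.Adj p.1 p.2) : IsMorseSimplex G {p} := by
  refine ⟨by simpa using hp, by simp, fun v => ?_⟩
  simpa using not_transGen_pair_self (q := p) (G.ne_of_adj hp) (G.ne_of_adj hp)
    (fun h => G.ne_of_adj hp (congrArg Prod.fst h)) v

theorem isMorseSimplex_pair_iff_s5 {p q : V × V} (hp : G.Adj p.1 p.2) (hq : G.Adj q.1 q.2)
    (hpq : p ≠ q) : IsMorseSimplex G {p, q} ↔ p.1 ≠ q.1 ∧ q ≠ p.swap := by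
  constructor
  · rintro ⟨-, hsrc, hacyc⟩
    refine ⟨fun h => hpq (hsrc p (by simp) q (by simp) h), ?_⟩
    rintro rfl
    exact hacyc p.1 (.tail (b := p.2) (.single (by simp)) (by simp [Prod.swap]))
  · rintro ⟨hsrc, hswap⟩
    refine ⟨by simp [hp, hq], ?_,
      not_transGen_pair_self (G.ne_of_adj hp) (G.ne_of_adj hq) hswap⟩
    simp only [mem_insert, mem_singleton]
    rintro _ (rfl | rfl) _ (rfl | rfl) h <;> simp_all

variable [Fintype V] [DecidableRel G.Adj]

theorem card_filter_fst_eq_degree (v : V) :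
    #{e : OrientedEdge G | e.1.1 = v} = G.degree v := by
  rw [← SimpleGraph.dart_fst_fiber_card_eq_degree]
  exact card_equiv (orientedEdgeEquivDart G) (by simp [orientedEdgeEquivDart])

open Classical in
noncomputable def morseNonNeighbors (e : OrientedEdge G) : Finset (OrientedEdge G) :=
  {f | ¬ IsMorseSimplex G {e.1, f.1}}

theorem morseNonNeighbors_eq (e : OrientedEdge G) :
    morseNonNeighbors e =
      insert e.reverse (({f | f.1.1 = e.1.1} : Finset (OrientedEdge G)).erase e) := by
  ext f
  by_cases hfe : f = e
  · subst hfe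
    simp [morseNonNeighbors, OrientedEdge.reverse, isMorseSimplex_singleton f.2, Subtype.ext_iff,
      Prod.ext_iff, G.ne_of_adj f.2]
  · simp [morseNonNeighbors, isMorseSimplex_pair_iff_s5 e.2 f.2 (fun h => hfe (Subtype.ext h).symm),
      OrientedEdge.reverse, Subtype.ext_iff, Subtype.coe_ne_coe.mpr hfe]
    rw [eq_comm (a := (f : V × V).1)]
    tauto

theorem card_morseNonNeighbors (e : OrientedEdge G) :
    #(morseNonNeighbors e) = G.degree e.1.1 := by
  have hpos : 0 < G.degree e.1.1 := G.degree_pos_iff_exists_adj e.1.1 |>.mpr ⟨_, e.2⟩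
  rw [morseNonNeighbors_eq, card_insert_of_notMem, card_erase_of_mem (by simp),
    card_filter_fst_eq_degree]
  · omega
  · simp [OrientedEdge.reverse, (G.ne_of_adj e.2).symm]

variable {W : Type*} [DecidableEq W] [Fintype W] {G' : SimpleGraph W} [DecidableRel G'.Adj]

theorem morseNonNeighbors_apply (F : OrientedEdge G ≃ OrientedEdge G')
    (hF : ∀ S : Finset (OrientedEdge G),
      IsMorseSimplex G (S.image Subtype.val) ↔ IsMorseSimplex G' ((S.image F).image Subtype.val))
    (e : OrientedEdge G) :
    morseNonNeighbors (F e) = (morseNonNeighbors e).map F.toEmbedding := by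
  ext f'
  obtain ⟨f, rfl⟩ := F.surjective f'
  have hef := hF {e, f}
  simp only [image_insert, image_singleton] at hef
  simp [morseNonNeighbors, hef]

theorem degree_fst_apply (F : OrientedEdge G ≃ OrientedEdge G')
    (hF : ∀ S : Finset (OrientedEdge G),
      IsMorseSimplex G (S.image Subtype.val) ↔ IsMorseSimplex G' ((S.image F).image Subtype.val))
    (e : OrientedEdge G) : G'.degree (F e).1.1 = G.degree e.1.1 := by
  rw [← card_morseNonNeighbors, morseNonNeighbors_apply F hF, card_map, card_morseNonNeighbors]

end MorseComplex

theorem stmt_5_general {V W : Type*} [Fintype V] [DecidableEq V] [Fintype W] [DecidableEq W]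
    (G : SimpleGraph V) (G' : SimpleGraph W) (hG' : G'.Connected)
    (h : MorseEquiv G G') (n : ℕ) (hn : 3 ≤ n)
    (hcyc : Nonempty (G ≃g SimpleGraph.cycleGraph n)) :
    Nonempty (G' ≃g SimpleGraph.cycleGraph n) := by
  classical
  obtain ⟨F, hF⟩ := h
  obtain ⟨φ⟩ := hcyc
  have hcardV : Fintype.card V = n := by simpa using Fintype.card_congr φ.toEquiv
  have hdegG (v : V) : G.degree v = 2 := by
    rw [← φ.degree_eq v, SimpleGraph.cycleGraph_degree_eq_two hn]
  have hdegW (w : W) : G'.degree w = 2 := by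
    obtain ⟨v⟩ : Nonempty V := Fintype.card_pos_iff.mp (by omega)
    obtain ⟨u, hvu⟩ := (G.degree_pos_iff_exists_adj v).mp (by rw [hdegG]; omega)
    have : Nontrivial W := ⟨_, _, G'.ne_of_adj (F ⟨(v, u), hvu⟩).2⟩
    obtain ⟨x, hwx⟩ := hG'.preconnected.exists_adj_of_nontrivial w
    have := degree_fst_apply F hF (F.symm ⟨(w, x), hwx⟩)
    rwa [F.apply_symm_apply, hdegG] at this
  have hcardW : Fintype.card W = n := by
    have hcard := Nat.card_congr F
    simp only [card_orientedEdge_s5, hdegG, hdegW, sum_const, card_univ, smul_eq_mul] at hcard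
    omega
  exact hG'.nonempty_iso_cycleGraph hn hcardW hdegW

/-- If `G` and `G'` are finite connected simple graphs with isomorphic discrete Morse
complexes and `G` is the cycle `C_n`, then `G'` is also isomorphic to `C_n`. -/
theorem stmt_5 {V W : Type*} [Fintype V] [DecidableEq V] [Fintype W] [DecidableEq W]
    (G : SimpleGraph V) (G' : SimpleGraph W) (hG : G.Connected) (hG' : G'.Connected)
    (h : MorseEquiv G G') (n : ℕ) (hn : 3 ≤ n)
    (hcyc : Nonempty (G ≃g SimpleGraph.cycleGraph n)) :
    Nonempty (G' ≃g SimpleGraph.cycleGraph n) :=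
  stmt_5_general G G' hG' h n hn hcyc
end

section
/- Two finite connected simple graphs G and G' are isomorphic if and only if their discrete Morse complexes 𝔐(G) and 𝔐(G') are isomorphic simplicial complexes. -/
/-!
An isomorphism of Morse complexes preserves the two-element non-faces `{e, f}` ("conflicts":
`e` and `f` share their source, or `f` is the reverse of `e`), hence also the relation "`e` and
`f` conflict and have no common conflicting edge", which always holds between an edge and its
reverse. If the isomorphism commutes with reversal, it also preserves "same source" and so induces
a bijection of vertices, which is a graph isomorphism. Otherwise some `e₀` is sent to an edge whose
reverse comes from an edge with the same source as `e₀`, conflicting with `e₀` in isolation. This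
forces degree two at that source, and the phenomenon propagates along edges, so `G`, and likewise
`G'`, is a cycle; the two cycles have equally many oriented edges, hence the same length.
-/

namespace SimpleGraph

variable {V W : Type*} {G : SimpleGraph V}

lemma Connected.forall_of_adj_closed {p : V → Prop}
    (hc : G.Connected) (hstep : ∀ ⦃u v⦄, G.Adj u v → p u → p v) {u : V} (hu : p u) (v : V) :
    p v := by
  obtain ⟨q⟩ := hc.preconnected u v
  induction q with
  | nil => exact hu
  | cons h _ ih => exact ih (hstep h hu)

lemma Copy.nonempty_iso_of_bijective [Finite V] {H : SimpleGraph W} (f : H.Copy G)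
    (hf : Function.Bijective f)
    (hdeg : ∀ a, (G.neighborSet (f a)).ncard ≤ (H.neighborSet a).ncard) : Nonempty (H ≃g G) := by
  refine ⟨⟨Equiv.ofBijective f hf, fun {a b} => ⟨fun hab => ?_, f.toHom.map_adj⟩⟩⟩
  have hsub : f '' H.neighborSet a ⊆ G.neighborSet (f a) := by
    rintro _ ⟨c, hc, rfl⟩
    exact f.toHom.map_adj hc
  have heq := Set.eq_of_subset_of_ncard_le hsub
    ((Set.ncard_image_of_injective _ f.injective).symm ▸ hdeg a) (Set.toFinite _)
  obtain ⟨c, hc, hcb⟩ := heq.symm.subset (show f b ∈ G.neighborSet (f a) from hab)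
  exact f.injective hcb ▸ hc

lemma Walk.isHamiltonianCycle_of_forall_mem_support [DecidableEq V] {u : V} {p : G.Walk u u}
    (hp : p.IsCycle) (hsupp : ∀ v, v ∈ p.support) : p.IsHamiltonianCycle := by
  refine isHamiltonianCycle_iff_isCycle_and_support_count_tail_eq_one.mpr
    ⟨hp, fun v => List.count_eq_one_of_mem hp.support_nodup ?_⟩
  rcases (p.mem_support_iff).mp (hsupp v) with rfl | h
  exacts [p.end_mem_tail_support hp.not_nil, h]

theorem Connected.nonempty_iso_cycleGraph_s8 [Fintype V] (hc : G.Connected)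
    (h2 : ∀ v, (G.neighborSet v).ncard = 2) : Nonempty (cycleGraph (Fintype.card V) ≃g G) := by
  classical
  obtain ⟨v₀⟩ := hc.nonempty
  obtain ⟨p, hp, hverts⟩ := IsCycles.exists_cycle_toSubgraph_verts_eq_connectedComponentSupp
    (fun v _ => h2 v) (c := G.connectedComponentMk v₀) rfl
    (Set.nonempty_of_ncard_ne_zero (by rw [h2]; norm_num))
  have hham : p.IsHamiltonianCycle := by
    refine Walk.isHamiltonianCycle_of_forall_mem_support hp fun v => ?_
    rw [← Walk.mem_verts_toSubgraph, hverts, ConnectedComponent.mem_supp_iff,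
      ConnectedComponent.eq]
    exact hc.preconnected v v₀
  obtain ⟨k, hk⟩ : ∃ k, Fintype.card V = k + 3 :=
    ⟨Fintype.card V - 3, by have := hham.length_eq ▸ hp.three_le_length; omega⟩
  rw [hk]
  obtain ⟨f⟩ := (cycleGraph_isContained_iff (by omega)).mpr ⟨v₀, p, hp, hham.length_eq.trans hk⟩
  refine f.nonempty_iso_of_bijective
    ((Fintype.bijective_iff_injective_and_card f).mpr ⟨f.injective, by simp [hk]⟩) fun a => ?_
  rw [h2, Set.ncard_eq_toFinset_card', Set.toFinset_card, card_neighborSet_eq_degree,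
    cycleGraph_degree_three_le]

lemma nonempty_iso_of_subsingleton [Subsingleton V] [Subsingleton W]
    (G : SimpleGraph V) (G' : SimpleGraph W) [Nonempty V] [Nonempty W] : Nonempty (G ≃g G') :=
  ⟨⟨equivOfSubsingletonOfSubsingleton (fun _ => Classical.arbitrary W)
    (fun _ => Classical.arbitrary V), fun {a b} => by simp [Subsingleton.elim a b]⟩⟩

end SimpleGraph

namespace OrientedEdge

variable {V : Type*} {G : SimpleGraph V}

def src (e : OrientedEdge G) : V := e.1.1

def tgt (e : OrientedEdge G) : V := e.1.2

def rev (e : OrientedEdge G) : OrientedEdge G := ⟨(e.tgt, e.src), e.2.symm⟩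

@[simp] lemma src_rev (e : OrientedEdge G) : e.rev.src = e.tgt := rfl

@[simp] lemma rev_rev (e : OrientedEdge G) : e.rev.rev = e := rfl

lemma rev_injective : Function.Injective (rev (G := G)) :=
  fun e f h => by rw [← rev_rev e, h, rev_rev]

lemma src_ne_tgt (e : OrientedEdge G) : e.src ≠ e.tgt := e.2.ne

lemma rev_ne_self (e : OrientedEdge G) : e.rev ≠ e :=
  fun h => e.src_ne_tgt (congrArg src h).symm

lemma ext_src_tgt {e f : OrientedEdge G} (hs : e.src = f.src) (ht : e.tgt = f.tgt) : e = f :=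
  Subtype.ext (Prod.ext hs ht)

lemma src_surjective (hc : G.Connected) (e₀ : OrientedEdge G) :
    Function.Surjective (src (G := G)) :=
  hc.forall_of_adj_closed (p := fun v => ∃ e, src e = v)
    (fun _ v huv _ => ⟨⟨(v, _), huv.symm⟩, rfl⟩) ⟨e₀, rfl⟩

lemma subsingleton_of_isEmpty (hc : G.Connected) (h : IsEmpty (OrientedEdge G)) :
    Subsingleton V :=
  ⟨fun a b => hc.forall_of_adj_closed (p := (a = ·))
    (fun u v huv _ => (h.false ⟨(u, v), huv⟩).elim) rfl b⟩

lemma natCard_eq_two_mul [Fintype V] (h2 : ∀ v, (G.neighborSet v).ncard = 2) :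
    Nat.card (OrientedEdge G) = 2 * Fintype.card V := by
  let sigmaEquiv : OrientedEdge G ≃ Σ v, G.neighborSet v :=
    { toFun e := ⟨e.src, e.tgt, e.2⟩
      invFun x := ⟨(x.1, x.2.1), x.2.2⟩
      left_inv _ := rfl
      right_inv _ := rfl }
  simp [Nat.card_congr sigmaEquiv, Nat.card_sigma, h2, mul_comm]

/-- `e` and `f` conflict when `{e, f}` is a non-face of `𝔐(G)` (see `isMorseSimplex_pair_iff`). -/
def Conflict (e f : OrientedEdge G) : Prop := e ≠ f ∧ (e.src = f.src ∨ f = e.rev)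

lemma src_eq_src_iff {e f : OrientedEdge G} :
    e.src = f.src ↔ e = f ∨ (Conflict e f ∧ f ≠ e.rev) := by
  refine ⟨fun h => or_iff_not_imp_left.mpr fun hne => ⟨⟨hne, Or.inl h⟩, ?_⟩, ?_⟩
  · rintro rfl
    exact e.src_ne_tgt h
  · rintro (rfl | ⟨⟨-, h | h⟩, hne⟩)
    exacts [rfl, h, absurd h hne]

def IsolatedConflict (e f : OrientedEdge G) : Prop :=
  Conflict e f ∧ ∀ g, ¬ (Conflict g e ∧ Conflict g f)

lemma isolatedConflict_rev (e : OrientedEdge G) : IsolatedConflict e e.rev := by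
  refine ⟨⟨(rev_ne_self e).symm, Or.inr rfl⟩, ?_⟩
  rintro g ⟨⟨hge, hg | hg⟩, ⟨hgr, hg' | hg'⟩⟩
  · exact e.src_ne_tgt (hg.symm.trans hg')
  · exact hge (rev_injective hg').symm
  all_goals exact hgr (by rw [hg, rev_rev])

lemma IsolatedConflict.eq_or_eq {e f g : OrientedEdge G} (h : IsolatedConflict e f)
    (hef : e.src = f.src) (hg : g.src = e.src) : g = e ∨ g = f := by
  by_contra! hne
  exact h.2 g ⟨⟨hne.1, Or.inl hg⟩, ⟨hne.2, Or.inl (hg.trans hef)⟩⟩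

lemma IsolatedConflict.neighborSet_eq {e f : OrientedEdge G} (h : IsolatedConflict e f)
    (hef : e.src = f.src) : G.neighborSet e.src = {e.tgt, f.tgt} := by
  ext u
  refine ⟨fun hu => ?_, ?_⟩
  · rcases h.eq_or_eq hef (g := ⟨(e.src, u), hu⟩) rfl with h | h
    exacts [Or.inl (congrArg tgt h), Or.inr (congrArg tgt h)]
  · rintro (rfl | rfl)
    exacts [e.2, hef ▸ f.2]

lemma IsolatedConflict.ncard_neighborSet {e f : OrientedEdge G} (h : IsolatedConflict e f)
    (hef : e.src = f.src) : (G.neighborSet e.src).ncard = 2 :=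
  (h.neighborSet_eq hef).symm ▸ Set.ncard_pair fun ht => h.1.1 (ext_src_tgt hef ht)

lemma ncard_neighborSet_eq_two_of_involutive (hc : G.Connected)
    {N : OrientedEdge G → OrientedEdge G} (hN : Function.Involutive N)
    (hiso : ∀ e, IsolatedConflict e (N e)) {e₀ : OrientedEdge G} (h₀ : N e₀ ≠ e₀.rev) (v : V) :
    (G.neighborSet v).ncard = 2 := by
  have src_N {e} (he : N e ≠ e.rev) : e.src = (N e).src := (hiso e).1.2.resolve_right he
  have rev_N {e} (he : N e ≠ e.rev) : N e.rev ≠ e.rev.rev :=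
    fun h => he ((congrArg N (h.trans e.rev_rev)).symm.trans (hN _))
  have out_N {e g} (he : N e ≠ e.rev) (hg : g.src = e.src) : N g ≠ g.rev := by
    rcases (hiso e).eq_or_eq (src_N he) hg with rfl | rfl
    · exact he
    · rw [hN]
      exact fun h => he (by rw [← rev_rev (N e), ← h])
  -- `N e ≠ e.rev` passes to every edge leaving `e.src` and to its reverse, so it spreads over `G`.
  obtain ⟨e, he, rfl⟩ : ∃ e, N e ≠ e.rev ∧ e.src = v := by
    refine hc.forall_of_adj_closed (p := fun v => ∃ e, N e ≠ e.rev ∧ e.src = v) ?_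
      ⟨e₀, h₀, rfl⟩ v
    rintro _ u hu ⟨e, he, rfl⟩
    exact ⟨rev ⟨(e.src, u), hu⟩, rev_N (out_N he rfl), rfl⟩
  exact (hiso e).ncard_neighborSet (src_N he)

section pair

variable {W : Type*} [DecidableEq V] [DecidableEq W] {G' : SimpleGraph W}

lemma not_transGen_pair {a b c d : V} (hab : a ≠ b) (hcd : c ≠ d) (hac : a ≠ c)
    (hrev : (c, d) ≠ (b, a)) (v : V) :
    ¬ Relation.TransGen (fun x y => (x, y) ∈ ({(a, b), (c, d)} : Finset (V × V))) v v := by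
  intro h
  have key : ∀ x y,
      Relation.TransGen (fun x y => (x, y) ∈ ({(a, b), (c, d)} : Finset (V × V))) x y →
      (x = a ∧ y = b) ∨ (x = c ∧ y = d) ∨ (x = a ∧ y = d ∧ b = c) ∨ (x = c ∧ y = b ∧ d = a) := by
    intro x y h
    induction h with
    | single h =>
      simp only [Finset.mem_insert, Finset.mem_singleton, Prod.mk.injEq] at h
      tauto
    | tail _ h ih =>
      simp only [Finset.mem_insert, Finset.mem_singleton, Prod.mk.injEq] at h
      grind
  grind

lemma isMorseSimplex_pair_iff {e f : OrientedEdge G} (hne : e ≠ f) :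
    IsMorseSimplex G (({e, f} : Finset (OrientedEdge G)).image Subtype.val) ↔ ¬ Conflict e f := by
  obtain ⟨⟨a, b⟩, hab⟩ := e
  obtain ⟨⟨c, d⟩, hcd⟩ := f
  simp only [Finset.image_insert, Finset.image_singleton, Conflict, ne_eq, hne, not_false_eq_true,
    true_and, not_or, src, rev, tgt, Subtype.mk.injEq]
  constructor
  · rintro ⟨-, hdist, hacyc⟩
    refine ⟨fun h => hne ?_, fun h => ?_⟩
    · exact Subtype.ext (hdist _ (by simp) _ (by simp) h)
    · simp only [Prod.mk.injEq] at h
      obtain ⟨rfl, rfl⟩ := h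
      exact hacyc d (.tail (.single (b := c) (by simp)) (by simp))
  · rintro ⟨hac, hrev⟩
    refine ⟨by simp [hab, hcd], by grind, not_transGen_pair hab.ne hcd.ne hac hrev⟩

def conflictRelIso (F : OrientedEdge G ≃ OrientedEdge G')
    (hF : ∀ S : Finset (OrientedEdge G), IsMorseSimplex G (S.image Subtype.val) ↔
      IsMorseSimplex G' ((S.image F).image Subtype.val)) :
    Conflict (G := G) ≃r Conflict (G := G') where
  toEquiv := F
  map_rel_iff' {e f} := by
    by_cases hef : e = f
    · subst hef
      simp [Conflict]
    · have h := hF {e, f}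
      rw [Finset.image_insert F, Finset.image_singleton F, isMorseSimplex_pair_iff hef,
        isMorseSimplex_pair_iff (F.injective.ne hef)] at h
      exact not_iff_not.mp h.symm

end pair

section transfer

variable {W : Type*} {G' : SimpleGraph W} (φ : Conflict (G := G) ≃r Conflict (G := G'))

lemma isolatedConflict_map_iff {e f : OrientedEdge G} :
    IsolatedConflict (φ e) (φ f) ↔ IsolatedConflict e f := by
  simp only [IsolatedConflict, φ.map_rel_iff, φ.surjective.forall]

lemma ncard_neighborSet_eq_two_of_map_rev_ne (hc : G.Connected) {e₀ : OrientedEdge G}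
    (h₀ : φ e₀.rev ≠ (φ e₀).rev) (v : V) : (G.neighborSet v).ncard = 2 := by
  refine ncard_neighborSet_eq_two_of_involutive hc (N := fun e => φ.symm (φ e).rev)
    (fun e => by simp) (fun e => ?_) (e₀ := e₀) (fun h => h₀ ?_) v
  · rw [← isolatedConflict_map_iff φ, RelIso.apply_symm_apply]
    exact isolatedConflict_rev _
  · rw [← h, RelIso.apply_symm_apply]

lemma nonempty_iso_of_map_rev (hrev : ∀ e, φ e.rev = (φ e).rev)
    (hV : Function.Surjective (src (G := G))) (hW : Function.Surjective (src (G := G'))) :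
    Nonempty (G ≃g G') := by
  have hsrc (e f : OrientedEdge G) : e.src = f.src ↔ (φ e).src = (φ f).src := by
    rw [src_eq_src_iff, src_eq_src_iff, φ.map_rel_iff, φ.injective.eq_iff, ← hrev,
      φ.injective.ne_iff]
  let ψ : V ≃ W := (Setoid.quotientKerEquivOfSurjective _ hV).symm.trans
    ((Quotient.congr φ.toEquiv hsrc).trans (Setoid.quotientKerEquivOfSurjective _ hW))
  have hψs (e : OrientedEdge G) : ψ e.src = (φ e).src := by
    have : (Setoid.quotientKerEquivOfSurjective _ hV).symm e.src = Quotient.mk _ e :=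
      (Equiv.symm_apply_eq _).mpr rfl
    simp only [ψ, Equiv.trans_apply, this, Quotient.congr_mk]
    rfl
  have hψt (e : OrientedEdge G) : ψ e.tgt = (φ e).tgt := by
    rw [← src_rev, hψs, hrev, src_rev]
  refine ⟨⟨ψ, fun {a b} => ⟨fun h => ?_, fun h => ?_⟩⟩⟩
  · set e := φ.symm ⟨(ψ a, ψ b), h⟩
    have hs : e.src = a := ψ.injective (by rw [hψs, RelIso.apply_symm_apply]; rfl)
    have ht : e.tgt = b := ψ.injective (by rw [hψt, RelIso.apply_symm_apply]; rfl)
    exact hs ▸ ht ▸ e.2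
  · let e : OrientedEdge G := ⟨(a, b), h⟩
    have he : G'.Adj (φ e).src (φ e).tgt := (φ e).2
    rw [← hψs, ← hψt] at he
    exact he

end transfer

end OrientedEdge

section iso

variable {V W : Type*} [DecidableEq W] {G : SimpleGraph V} {G' : SimpleGraph W}

lemma IsMorseSimplex.image_iso (φ : G ≃g G') {T : Finset (V × V)} (h : IsMorseSimplex G T) :
    IsMorseSimplex G' (T.image (Prod.map φ φ)) := by
  obtain ⟨hadj, hsrc, hacyc⟩ := h
  refine ⟨?_, ?_, fun v hv => hacyc (φ.symm v) ?_⟩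
  · simp only [Finset.forall_mem_image, Prod.map_fst, Prod.map_snd]
    exact fun p hp => φ.map_adj_iff.mpr (hadj p hp)
  · simp only [Finset.forall_mem_image]
    exact fun p hp q hq h => by rw [hsrc p hp q hq (φ.injective h)]
  · refine hv.lift φ.symm fun a b hab => ?_
    obtain ⟨⟨x, y⟩, hp, hxy⟩ := Finset.mem_image.mp hab
    obtain ⟨rfl, rfl⟩ := Prod.mk.inj hxy
    simpa [Function.onFun] using hp

lemma isMorseSimplex_image_iso_iff [DecidableEq V] (φ : G ≃g G') (T : Finset (V × V)) :
    IsMorseSimplex G' (T.image (Prod.map φ φ)) ↔ IsMorseSimplex G T := by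
  refine ⟨fun h => ?_, IsMorseSimplex.image_iso φ⟩
  simpa [Finset.image_image, Prod.map_comp_map] using h.image_iso φ.symm

lemma SimpleGraph.Iso.morseEquiv [DecidableEq V] (φ : G ≃g G') : MorseEquiv G G' := by
  refine ⟨Equiv.subtypeEquiv (φ.toEquiv.prodCongr φ.toEquiv) fun p => φ.map_adj_iff.symm,
    fun S => ?_⟩
  rw [← isMorseSimplex_image_iso_iff φ, Finset.image_image, Finset.image_image]
  rfl

end iso

open OrientedEdge

/-- Two finite connected simple graphs are isomorphic if and only if their discrete
Morse complexes are isomorphic simplicial complexes. -/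
theorem stmt_8 {V W : Type*} [Fintype V] [DecidableEq V] [Fintype W] [DecidableEq W]
    (G : SimpleGraph V) (G' : SimpleGraph W) (hG : G.Connected) (hG' : G'.Connected) :
    Nonempty (G ≃g G') ↔ MorseEquiv G G' := by
  refine ⟨fun ⟨φ⟩ => φ.morseEquiv, fun ⟨F, hF⟩ => ?_⟩
  let φ := conflictRelIso F hF
  rcases isEmpty_or_nonempty (OrientedEdge G) with hE | ⟨⟨e₀⟩⟩
  · have := subsingleton_of_isEmpty hG hE
    have := subsingleton_of_isEmpty hG' F.symm.isEmpty
    have := hG.nonempty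
    have := hG'.nonempty
    exact SimpleGraph.nonempty_iso_of_subsingleton G G'
  by_cases hrev : ∀ e, φ e.rev = (φ e).rev
  · exact nonempty_iso_of_map_rev φ hrev (src_surjective hG e₀) (src_surjective hG' (φ e₀))
  obtain ⟨e₁, h₁⟩ := not_forall.mp hrev
  have h2 := ncard_neighborSet_eq_two_of_map_rev_ne φ hG h₁
  have h2' := ncard_neighborSet_eq_two_of_map_rev_ne φ.symm hG' (e₀ := φ e₁)
    (by rwa [RelIso.symm_apply_apply, ne_eq, RelIso.symm_apply_eq, eq_comm])
  have hcard : Fintype.card V = Fintype.card W := by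
    have := Nat.card_congr F
    rw [natCard_eq_two_mul h2, natCard_eq_two_mul h2'] at this
    omega
  obtain ⟨ι⟩ := hG.nonempty_iso_cycleGraph_s8 h2
  obtain ⟨ι'⟩ := hG'.nonempty_iso_cycleGraph_s8 h2'
  rw [hcard] at ι
  exact ⟨ι.symm.trans ι'⟩
end

section
/- Let G be a finite connected multigraph with at least 3 vertices. Two distinct oriented edges (v,e), (v',e') of G are parallel (meaning v = v' and e, e' have the same endpoints) if and only if they are incompatible in 𝔐(G) (do not span an edge of 𝔐(G)) and lk((v,e), 𝔐(G)) = lk((v',e'), 𝔐(G)). -/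
/-- A multigraph: a set of vertices `V`, a set of edges `E`, and a map assigning to
each edge an unordered pair of distinct endpoints (no loops). -/
structure Multigraph (V E : Type*) where
  ends : E → Sym2 V
  not_isDiag : ∀ e, ¬ (ends e).IsDiag

/-- The underlying simple graph (simplification) of a multigraph: `u` and `w` are
adjacent iff some edge of `G` has endpoints `{u, w}`. -/
def Multigraph.toSimple {V E : Type*} (G : Multigraph V E) : SimpleGraph V where
  Adj u w := u ≠ w ∧ ∃ e, G.ends e = s(u, w)
  symm := by
    constructor
    rintro u w ⟨h, e, he⟩
    exact ⟨h.symm, e, by rw [he, Sym2.eq_swap]⟩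
  loopless := ⟨fun u h => h.1 rfl⟩

/-- A multigraph is connected iff its underlying simple graph is. -/
def Multigraph.Connected {V E : Type*} (G : Multigraph V E) : Prop :=
  G.toSimple.Connected

/-- `S` is a simplex of the discrete Morse complex `𝔐(G)` of the multigraph `G`
(an acyclic matching): a set of oriented edges `(v, e)` with `v` an endpoint of `e`,
no two sharing their source vertex, no edge used twice, and no directed cycle
(directed 2-cycles through parallel edges included). -/
def IsMorseSimplexM {V E : Type*} (G : Multigraph V E) (S : Finset (V × E)) : Prop :=
  (∀ p ∈ S, p.1 ∈ G.ends p.2) ∧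
  (∀ p ∈ S, ∀ q ∈ S, p.1 = q.1 → p = q) ∧
  (∀ p ∈ S, ∀ q ∈ S, p.2 = q.2 → p = q) ∧
  (∀ v : V, ¬ Relation.TransGen
    (fun a b => ∃ e, (a, e) ∈ S ∧ G.ends e = s(a, b)) v v)

/-- The discrete Morse complex `𝔐(G)` of a multigraph, as a family of finite sets. -/
def MCpxM {V E : Type*} (G : Multigraph V E) : Set (Finset (V × E)) :=
  {S | IsMorseSimplexM G S}

/-- The link of a vertex `p` (an oriented edge of `G`) in `𝔐(G)`. -/
def lkM {V E : Type*} [DecidableEq V] [DecidableEq E] (G : Multigraph V E)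
    (p : V × E) : Set (Finset (V × E)) :=
  {S | p ∉ S ∧ insert p S ∈ MCpxM G}

/-! Parallel oriented edges `(v, e)`, `(v, e')` share their tail, and a simplex of the link of
`(v, e)` never uses `e'`: at `v` it would repeat the tail, at the other end it would close a
directed 2-cycle. Hence the two links coincide.

Conversely, equal links force parallelism. For a common tail `v`, with `e = vu` and `e' = vu'`
where `u ≠ u'`, the oriented edge `(u', e')` lies in the link of `(v, e)` but not in that of
`(v, e')`. For distinct tails `v ≠ v'`, connectivity and a third vertex give an edge `f` from one
of them, say `v`, to some `w ≠ v'`; then `(v, f)` lies in the link of `(v', e')` but shares its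
tail with `(v, e)`. -/

theorem Relation.TransGen.lt_of_map_lt {α β : Type*} [Preorder β] {r : α → α → Prop}
    {ρ : α → β} (h : ∀ a b, r a b → ρ a < ρ b) {x y : α}
    (hxy : Relation.TransGen r x y) : ρ x < ρ y := by
  simpa only [Relation.transGen_eq_self] using hxy.lift ρ h

theorem SimpleGraph.Connected.exists_adj_of_mem_of_notMem {V : Type*} {H : SimpleGraph V}
    (hH : H.Connected) {S : Set V} {x y : V} (hx : x ∈ S) (hy : y ∉ S) :
    ∃ a ∈ S, ∃ b ∉ S, H.Adj a b := by
  obtain ⟨d, -, hd, hd'⟩ := (hH.preconnected x y).some.exists_boundary_dart S hx hy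
  exact ⟨d.fst, hd, d.snd, hd', d.adj⟩

namespace Multigraph

variable {V E : Type*} (G : Multigraph V E)

theorem ne_of_ends_eq {e : E} {a b : V} (h : G.ends e = s(a, b)) : a ≠ b := by
  rintro rfl
  exact G.not_isDiag e (h ▸ Sym2.mk_isDiag_iff.mpr rfl)

theorem Connected.exists_ends_eq_of_three_le_card [Fintype V] {G : Multigraph V E}
    (hc : G.Connected) (h3 : 3 ≤ Fintype.card V) (v v' : V) :
    ∃ x ∈ ({v, v'} : Set V), ∃ w ∉ ({v, v'} : Set V), ∃ f, G.ends f = s(x, w) := by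
  classical
  obtain ⟨u, -, hu⟩ := Finset.exists_mem_notMem_of_card_lt_card
    (s := {v, v'}) (t := Finset.univ) (by grind [Finset.card_le_two, Finset.card_univ])
  obtain ⟨x, hx, w, hw, -, f, hf⟩ :=
    hc.exists_adj_of_mem_of_notMem (S := {v, v'}) (x := v) (by simp) (by simpa using hu)
  exact ⟨x, hx, w, hw, f, hf⟩

end Multigraph

def morseRel {V E : Type*} (G : Multigraph V E) (S : Finset (V × E)) : V → V → Prop :=
  fun a b => ∃ e, (a, e) ∈ S ∧ G.ends e = s(a, b)

section MorseComplex

variable {V E : Type*} [DecidableEq V] [DecidableEq E] (G : Multigraph V E)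

theorem singleton_mem_lkM_iff {p q : V × E} :
    {q} ∈ lkM G p ↔ q ≠ p ∧ IsMorseSimplexM G {p, q} := by
  simp [lkM, MCpxM, eq_comm]

theorem not_isMorseSimplexM_pair_of_fst_eq {p q : V × E} (hpq : p ≠ q) (h : p.1 = q.1) :
    ¬ IsMorseSimplexM G {p, q} :=
  fun hS => hpq (hS.2.1 p (by simp) q (by simp) h)

theorem not_isMorseSimplexM_pair_of_snd_eq {p q : V × E} (hpq : p ≠ q) (h : p.2 = q.2) :
    ¬ IsMorseSimplexM G {p, q} :=
  fun hS => hpq (hS.2.2.1 p (by simp) q (by simp) h)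

theorem isMorseSimplexM_pair {a b : V} {f g : E} (hab : a ≠ b) (ha : a ∈ G.ends f)
    (hb : b ∈ G.ends g) (hf : G.ends f ≠ s(a, b)) : IsMorseSimplexM G {(a, f), (b, g)} := by
  have hfg : f ≠ g := by
    rintro rfl
    exact hf ((Sym2.mem_and_mem_iff hab).mp ⟨ha, hb⟩)
  refine ⟨by simp [ha, hb], by simp [hab, hab.symm], by simp [hfg, hfg.symm], fun x hx => ?_⟩
  -- `a` points at neither `a` nor `b`, so this rank increases along both arrows
  refine lt_irrefl _ (hx.lt_of_map_lt (ρ := fun y => if y = b then 0 else if y = a then 1 else 2)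
    fun c d ⟨e, he, hcd⟩ => ?_)
  have hcd' := G.ne_of_ends_eq hcd
  simp only [Finset.mem_insert, Finset.mem_singleton, Prod.mk.injEq] at he
  rcases he with ⟨rfl, rfl⟩ | ⟨rfl, rfl⟩
  · have hdb : d ≠ b := by rintro rfl; exact hf hcd
    simp [hab, hdb, hcd'.symm]
  · simp only [hcd'.symm, if_false]
    split_ifs <;> simp

theorem lkM_subset_of_ends_eq {v : V} {e e' : E} (hee : G.ends e = G.ends e') :
    lkM G (v, e) ⊆ lkM G (v, e') := by
  rintro S ⟨hvS, h1, h2, h3, h4⟩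
  obtain ⟨u, hu⟩ := Sym2.mem_iff_exists.mp (h1 (v, e) (by simp))
  have he'S : ∀ w, (w, e') ∉ S := by
    intro w hw
    have hw' : w ∈ s(v, u) := hu ▸ hee ▸ h1 (w, e') (by simp [hw])
    rcases Sym2.mem_iff.mp hw' with rfl | rfl
    · exact hvS (h2 (w, e') (by simp [hw]) (w, e) (by simp) rfl ▸ hw)
    · refine h4 v (.tail (.single ⟨e, by simp, hu⟩) ⟨e', by simp [hw], ?_⟩)
      rw [← hee, hu, Sym2.eq_swap]
  have hrel : morseRel G (insert (v, e') S) = morseRel G (insert (v, e) S) := by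
    funext a b
    simp only [morseRel, Finset.mem_insert, Prod.mk.injEq]
    grind
  refine ⟨fun h => he'S v h, ?_, ?_, ?_, ?_⟩
  · rintro p hp
    rcases Finset.mem_insert.mp hp with rfl | hp
    exacts [hee ▸ h1 (v, e) (by simp), h1 p (by simp [hp])]
  · change Set.InjOn Prod.fst (↑(insert (v, e) S) : Set (V × E)) at h2
    change Set.InjOn Prod.fst (↑(insert (v, e') S) : Set (V × E))
    rw [Finset.coe_insert, Set.injOn_insert (by simpa using hvS)] at h2
    rw [Finset.coe_insert, Set.injOn_insert (by simpa using he'S v)]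
    exact h2
  · change Set.InjOn Prod.snd (↑(insert (v, e) S) : Set (V × E)) at h3
    change Set.InjOn Prod.snd (↑(insert (v, e') S) : Set (V × E))
    rw [Finset.coe_insert, Set.injOn_insert (by simpa using hvS)] at h3
    rw [Finset.coe_insert, Set.injOn_insert (by simpa using he'S v)]
    exact ⟨h3.1, by simpa using he'S⟩
  · change ∀ x, ¬ Relation.TransGen (morseRel G (insert (v, e') S)) x x
    rwa [hrel]

theorem lkM_eq_of_ends_eq {v : V} {e e' : E} (hee : G.ends e = G.ends e') :
    lkM G (v, e) = lkM G (v, e') :=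
  (lkM_subset_of_ends_eq G hee).antisymm (lkM_subset_of_ends_eq G hee.symm)

theorem ends_eq_of_lkM_eq {v : V} {e e' : E} (hv : v ∈ G.ends e) (hv' : v ∈ G.ends e')
    (hlk : lkM G (v, e) = lkM G (v, e')) : G.ends e = G.ends e' := by
  by_contra hee
  obtain ⟨u', hu'⟩ := Sym2.mem_iff_exists.mp hv'
  have hvu' := G.ne_of_ends_eq hu'
  have hmem : {(u', e')} ∈ lkM G (v, e) := by
    refine (singleton_mem_lkM_iff G).mpr ⟨by simp [hvu'.symm], ?_⟩
    exact isMorseSimplexM_pair G hvu' hv (hu' ▸ Sym2.mem_mk_right v u') (hu' ▸ hee)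
  rw [hlk, singleton_mem_lkM_iff] at hmem
  exact not_isMorseSimplexM_pair_of_snd_eq G hmem.1.symm rfl hmem.2

theorem lkM_ne_of_ends_eq {v v' w : V} {e e' f : E} (hvv : v ≠ v') (hv' : v' ∈ G.ends e')
    (hf : G.ends f = s(v, w)) (hw : w ≠ v') :
    lkM G (v, e) ≠ lkM G (v', e') := by
  have hfv : G.ends f ≠ s(v, v') := by rwa [hf, Ne, Sym2.congr_right]
  have hmem : {(v, f)} ∈ lkM G (v', e') := by
    refine (singleton_mem_lkM_iff G).mpr ⟨by simp [hvv], ?_⟩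
    rw [Finset.pair_comm]
    exact isMorseSimplexM_pair G hvv (hf ▸ Sym2.mem_mk_left v w) hv' hfv
  intro hlk
  rw [← hlk, singleton_mem_lkM_iff] at hmem
  exact not_isMorseSimplexM_pair_of_fst_eq G hmem.1.symm rfl hmem.2

end MorseComplex

theorem stmt_11_general {V E : Type*} [Fintype V] [DecidableEq V] [DecidableEq E]
    (G : Multigraph V E) (hc : G.Connected) (h3 : 3 ≤ Fintype.card V)
    (v v' : V) (e e' : E) (hv : v ∈ G.ends e) (hv' : v' ∈ G.ends e')
    (hne : (v, e) ≠ (v', e')) :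
    (v = v' ∧ G.ends e = G.ends e') ↔
      (¬ IsMorseSimplexM G {(v, e), (v', e')} ∧ lkM G (v, e) = lkM G (v', e')) := by
  constructor
  · rintro ⟨rfl, hee⟩
    exact ⟨not_isMorseSimplexM_pair_of_fst_eq G hne rfl, lkM_eq_of_ends_eq G hee⟩
  rintro ⟨-, hlk⟩
  obtain rfl | hvv := eq_or_ne v v'
  · exact ⟨rfl, ends_eq_of_lkM_eq G hv hv' hlk⟩
  obtain ⟨x, hx, w, hw, f, hf⟩ := hc.exists_ends_eq_of_three_le_card h3 v v'
  simp only [Set.mem_insert_iff, Set.mem_singleton_iff, not_or] at hx hw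
  rcases hx with rfl | rfl
  · exact (lkM_ne_of_ends_eq G hvv hv' hf hw.2 hlk).elim
  · exact (lkM_ne_of_ends_eq G hvv.symm hv hf hw.1 hlk.symm).elim

/-- Let `G` be a finite connected multigraph with at least three vertices.  Two distinct
oriented edges `(v,e)` and `(v',e')` of `G` are parallel (`v = v'` and `e, e'` have the
same endpoints) iff they are incompatible in `𝔐(G)` and have the same link in `𝔐(G)`. -/
theorem stmt_11 {V E : Type*} [Fintype V] [DecidableEq V] [Fintype E] [DecidableEq E]
    (G : Multigraph V E) (hc : G.Connected) (h3 : 3 ≤ Fintype.card V)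
    (v v' : V) (e e' : E) (hv : v ∈ G.ends e) (hv' : v' ∈ G.ends e')
    (hne : (v, e) ≠ (v', e')) :
    (v = v' ∧ G.ends e = G.ends e') ↔
      (¬ IsMorseSimplexM G {(v, e), (v', e')} ∧ lkM G (v, e) = lkM G (v', e')) :=
  stmt_11_general G hc h3 v v' e e' hv hv' hne
end

section
/- If {(σ₁,τ₁), (σ₂,τ₂), (σ₃,τ₃)} is a minimal f-cycle of index k−1 in a simplicial complex K (each σᵢ a (k−1)-face of the k-simplex τᵢ, pairwise incompatible as a triple but pairwise compatible), then the subcomplex spanned by τ₁, τ₂, τ₃ has exactly k+2 vertices and a complete 1-skeleton. -/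
/-!
A closed gradient path of a matching with three pairs can only visit the three source faces
`σ₁, σ₂, σ₃`; since the pairs are pairwise compatible it has no loops or 2-cycles, so it is a
triangle `σ₁ → σ₂ → σ₃ → σ₁` (up to orientation). A gradient step `σᵢ → σⱼ` between distinct
`(k-1)`-faces of the `k`-simplex `τᵢ` forces `τᵢ = σᵢ ∪ σⱼ`. Hence `τ₂ ⊆ τ₁ ∪ τ₃`, the two
distinct simplices `τ₁, τ₃` share the face `σ₁` and so span `k + 2` vertices, and any two
vertices lie in a common `σᵢ ∪ σⱼ`, which is one of the `τ`'s.
-/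

/-- `K` is a (finite, abstract) simplicial complex on the vertex type `A`. -/
def IsComplex {A : Type*} (K : Set (Finset A)) : Prop :=
  (∀ s ∈ K, s.Nonempty) ∧ ∀ s ∈ K, ∀ t ⊆ s, t.Nonempty → t ∈ K

/-- `S` is a simplex of the discrete Morse complex `𝔐(K)`: an acyclic matching on the
Hasse diagram of `K`.  Its elements are regular pairs `(σ, τ)` with `σ` a
codimension-one face of `τ`, each simplex of `K` occurs in at most one pair, and there
is no closed gradient path (no directed cycle after reversing matched edges). -/
def IsAcyclicMatching {A : Type*} (K : Set (Finset A))
    (S : Finset (Finset A × Finset A)) : Prop :=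
  (∀ p ∈ S, p.1 ∈ K ∧ p.2 ∈ K ∧ p.1 ⊆ p.2 ∧ p.1.card + 1 = p.2.card) ∧
  (∀ p ∈ S, ∀ q ∈ S, p ≠ q →
    p.1 ≠ q.1 ∧ p.1 ≠ q.2 ∧ p.2 ≠ q.1 ∧ p.2 ≠ q.2) ∧
  (∀ σ : Finset A, ¬ Relation.TransGen
    (fun a b => a ≠ b ∧ ∃ τ, (a, τ) ∈ S ∧ b ⊆ τ ∧ b.card + 1 = τ.card) σ σ)

open Finset Relation

theorem Relation.TransGen.three_cycle_of_self {α : Type*} {r : α → α → Prop} {a b c x : α}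
    (hsrc : ∀ u v, r u v → u = a ∨ u = b ∨ u = c) (hasymm : ∀ u v, r u v → ¬ r v u)
    (hx : TransGen r x x) :
    (r a b ∧ r b c ∧ r c a) ∨ (r a c ∧ r c b ∧ r b a) := by
  have hirr : ∀ u, ¬ r u u := fun u h => hasymm u u h h
  have next : ∀ {u}, TransGen r u x → ∃ v, r u v ∧ (x = v ∨ TransGen r v x) := fun h => by
    obtain ⟨v, huv, hv⟩ := TransGen.head'_iff.1 h
    exact ⟨v, huv, reflTransGen_iff_eq_or_transGen.1 hv⟩
  obtain ⟨y, hxy, rfl | hy⟩ := next hx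
  · exact (hirr _ hxy).elim
  obtain ⟨z, hyz, rfl | hz⟩ := next hy
  · exact (hasymm _ _ hxy hyz).elim
  obtain ⟨w, hzw, hw⟩ := next hz
  have hw' : x = w ∨ w = a ∨ w = b ∨ w = c := by
    rcases hw with hw | hw
    · exact .inl hw
    · obtain ⟨v, hwv, -⟩ := next hw
      exact .inr (hsrc _ _ hwv)
  have hwy : w ≠ y := by rintro rfl; exact hasymm _ _ hyz hzw
  -- `x, y, z` are distinct sources, so they exhaust `a, b, c` and force `w = x`.
  rcases hsrc _ _ hxy with rfl | rfl | rfl <;> rcases hsrc _ _ hyz with rfl | rfl | rfl <;>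
    rcases hsrc _ _ hzw with rfl | rfl | rfl <;> rcases hw' with rfl | rfl | rfl | rfl <;>
    simp_all

namespace Finset

variable {A : Type*} [DecidableEq A] {s s' t t' : Finset A} {k : ℕ}

theorem union_eq_of_card_eq_succ (hs : s ⊆ t) (hs' : s' ⊆ t) (hne : s ≠ s')
    (hcs : s.card = k) (hcs' : s'.card = k) (hct : t.card = k + 1) : s ∪ s' = t := by
  have hss' : s ⊂ s ∪ s' := by
    refine ssubset_iff_subset_ne.2 ⟨subset_union_left, fun h => hne ?_⟩
    exact (eq_of_subset_of_card_le (h ▸ subset_union_right) (by omega)).symm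
  exact eq_of_subset_of_card_le (union_subset hs hs') (by have := card_lt_card hss'; omega)

theorem card_union_of_ne_of_card_eq_succ (hs : s ⊆ t) (hs' : s ⊆ t') (hne : t ≠ t')
    (hcs : s.card = k) (hct : t.card = k + 1) (hct' : t'.card = k + 1) :
    (t ∪ t').card = k + 2 := by
  have hinter : t ∩ t' ⊂ t := by
    refine ssubset_iff_subset_ne.2 ⟨inter_subset_left, fun h => hne ?_⟩
    exact eq_of_subset_of_card_le (h ▸ inter_subset_right) (by omega)
  have hlt := card_lt_card hinter
  have hle := card_le_card (subset_inter hs hs')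
  have := card_union_add_card_inter t t'
  omega

end Finset

section Triangle

variable {A : Type*} [DecidableEq A] {σ₁ σ₂ σ₃ τ₁ τ₂ τ₃ : Finset A}

theorem card_union_of_triangle {k : ℕ} (h₁ : σ₁ ∪ σ₂ = τ₁) (h₂ : σ₂ ∪ σ₃ = τ₂)
    (h₃ : σ₃ ∪ σ₁ = τ₃) (hne : τ₁ ≠ τ₃) (hσ : σ₁.card = k) (hτ₁ : τ₁.card = k + 1)
    (hτ₃ : τ₃.card = k + 1) : (τ₁ ∪ τ₂ ∪ τ₃).card = k + 2 := by
  subst h₁ h₂ h₃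
  have hτ₂ : σ₂ ∪ σ₃ ⊆ σ₁ ∪ σ₂ ∪ (σ₃ ∪ σ₁) := by
    intro x; simp only [mem_union]; tauto
  rw [union_right_comm, union_eq_left.2 hτ₂]
  exact card_union_of_ne_of_card_eq_succ subset_union_left subset_union_right hne hσ hτ₁ hτ₃

theorem IsComplex.pair_mem_of_triangle {K : Set (Finset A)} (hK : IsComplex K)
    (h₁ : σ₁ ∪ σ₂ = τ₁) (h₂ : σ₂ ∪ σ₃ = τ₂) (h₃ : σ₃ ∪ σ₁ = τ₃)
    (hτ₁ : τ₁ ∈ K) (hτ₂ : τ₂ ∈ K) (hτ₃ : τ₃ ∈ K) :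
    ∀ x ∈ τ₁ ∪ τ₂ ∪ τ₃, ∀ y ∈ τ₁ ∪ τ₂ ∪ τ₃, ({x, y} : Finset A) ∈ K := by
  subst h₁ h₂ h₃
  intro x hx y hy
  have hxy : {x, y} ⊆ σ₁ ∪ σ₂ ∨ {x, y} ⊆ σ₂ ∪ σ₃ ∨ {x, y} ⊆ σ₃ ∪ σ₁ := by
    simp only [insert_subset_iff, singleton_subset_iff, mem_union] at hx hy ⊢
    tauto
  rcases hxy with h | h | h
  exacts [hK.2 _ hτ₁ _ h (insert_nonempty _ _), hK.2 _ hτ₂ _ h (insert_nonempty _ _),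
    hK.2 _ hτ₃ _ h (insert_nonempty _ _)]

end Triangle

section Matching

variable {A : Type*} {K : Set (Finset A)} {S T : Finset (Finset A × Finset A)}
  {p q : Finset A × Finset A}

/-- The relation whose closed paths `IsAcyclicMatching` forbids. -/
def GradientStep (S : Finset (Finset A × Finset A)) (a b : Finset A) : Prop :=
  a ≠ b ∧ ∃ τ, (a, τ) ∈ S ∧ b ⊆ τ ∧ b.card + 1 = τ.card

theorem GradientStep.mono (hST : S ⊆ T) {a b : Finset A} (h : GradientStep S a b) :
    GradientStep T a b :=
  let ⟨hab, τ, hτ, hb, hcard⟩ := h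
  ⟨hab, τ, hST hτ, hb, hcard⟩

theorem IsAcyclicMatching.mono (h : IsAcyclicMatching K S) (hTS : T ⊆ S) :
    IsAcyclicMatching K T :=
  ⟨fun p hp => h.1 p (hTS hp), fun p hp q hq => h.2.1 p (hTS hp) q (hTS hq),
    fun σ hσ => h.2.2 σ (TransGen.mono (fun _ _ => GradientStep.mono hTS) _ _ hσ)⟩

variable [DecidableEq A]

def PairwiseCompatible (K : Set (Finset A)) (S : Finset (Finset A × Finset A)) : Prop :=
  ∀ p ∈ S, ∀ q ∈ S, IsAcyclicMatching K {p, q}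

theorem pairwiseCompatible_triple {p₁ p₂ p₃ : Finset A × Finset A}
    (h₁₂ : IsAcyclicMatching K {p₁, p₂}) (h₁₃ : IsAcyclicMatching K {p₁, p₃})
    (h₂₃ : IsAcyclicMatching K {p₂, p₃}) : PairwiseCompatible K {p₁, p₂, p₃} := by
  intro p hp q hq
  have hpq : ({p, q} : Finset _) ⊆ {p₁, p₂} ∨ ({p, q} : Finset _) ⊆ {p₁, p₃} ∨
      ({p, q} : Finset _) ⊆ {p₂, p₃} := by
    simp only [insert_subset_iff, singleton_subset_iff, mem_insert, mem_singleton] at hp hq ⊢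
    tauto
  rcases hpq with h | h | h
  exacts [h₁₂.mono h, h₁₃.mono h, h₂₃.mono h]

namespace PairwiseCompatible

variable (hS : PairwiseCompatible K S)
include hS

theorem regular (hp : p ∈ S) : p.1 ∈ K ∧ p.2 ∈ K ∧ p.1 ⊆ p.2 ∧ p.1.card + 1 = p.2.card :=
  (hS p hp p hp).1 p (by simp)

theorem faces_ne (hp : p ∈ S) (hq : q ∈ S) (hpq : p ≠ q) :
    p.1 ≠ q.1 ∧ p.1 ≠ q.2 ∧ p.2 ≠ q.1 ∧ p.2 ≠ q.2 :=
  (hS p hp q hq).2.1 p (by simp) q (by simp) hpq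

theorem exists_transGen_self (h : ¬ IsAcyclicMatching K S) :
    ∃ σ, TransGen (GradientStep S) σ σ := by
  by_contra! hacyc
  exact h ⟨fun p hp => hS.regular hp, fun p hp q hq => hS.faces_ne hp hq, hacyc⟩

theorem gradientStep_asymm {a b : Finset A} (hab : GradientStep S a b) :
    ¬ GradientStep S b a := by
  rintro ⟨hba, τ', hτ', ha, hacard⟩
  obtain ⟨-, τ, hτ, hb, hbcard⟩ := hab
  exact (hS _ hτ _ hτ').2.2 a <|
    .tail (.single ⟨hba.symm, τ, by simp, hb, hbcard⟩) ⟨hba, τ', by simp, ha, hacard⟩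

theorem union_eq_of_gradientStep (hp : p ∈ S) (hcard : q.1.card = p.1.card)
    (h : GradientStep S p.1 q.1) : p.1 ∪ q.1 = p.2 := by
  obtain ⟨hne, τ, hτ, hq, -⟩ := h
  have hτp : (p.1, τ) = p := by
    by_contra hτp
    exact (hS.faces_ne hτ hp hτp).1 rfl
  obtain ⟨-, -, hp₁, hpcard⟩ := hS.regular hp
  exact union_eq_of_card_eq_succ hp₁ (hτp ▸ hq) hne rfl hcard hpcard.symm

theorem card_union_and_pair_mem_of_cycle (hK : IsComplex K) {k : ℕ}
    {q₁ q₂ q₃ : Finset A × Finset A} (hq₁ : q₁ ∈ S) (hq₂ : q₂ ∈ S) (hq₃ : q₃ ∈ S)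
    (hk : q₁.1.card = k ∧ q₂.1.card = k ∧ q₃.1.card = k)
    (h₁ : GradientStep S q₁.1 q₂.1) (h₂ : GradientStep S q₂.1 q₃.1)
    (h₃ : GradientStep S q₃.1 q₁.1) :
    (q₁.2 ∪ q₂.2 ∪ q₃.2).card = k + 2 ∧
      ∀ x ∈ q₁.2 ∪ q₂.2 ∪ q₃.2, ∀ y ∈ q₁.2 ∪ q₂.2 ∪ q₃.2, ({x, y} : Finset A) ∈ K := by
  obtain ⟨hk₁, hk₂, hk₃⟩ := hk
  have e₁ := hS.union_eq_of_gradientStep hq₁ (by omega) h₁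
  have e₂ := hS.union_eq_of_gradientStep hq₂ (by omega) h₂
  have e₃ := hS.union_eq_of_gradientStep hq₃ (by omega) h₃
  obtain ⟨-, hK₁, -, hc₁⟩ := hS.regular hq₁
  obtain ⟨-, hK₂, -, -⟩ := hS.regular hq₂
  obtain ⟨-, hK₃, -, hc₃⟩ := hS.regular hq₃
  have hne : q₁ ≠ q₃ := fun h => h₃.1 (h ▸ rfl)
  exact ⟨card_union_of_triangle e₁ e₂ e₃ (hS.faces_ne hq₁ hq₃ hne).2.2.2 hk₁ (by omega)
      (by omega), hK.pair_mem_of_triangle e₁ e₂ e₃ hK₁ hK₂ hK₃⟩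

end PairwiseCompatible

theorem gradientStep_triple_source {p₁ p₂ p₃ : Finset A × Finset A} {a b : Finset A}
    (h : GradientStep {p₁, p₂, p₃} a b) : a = p₁.1 ∨ a = p₂.1 ∨ a = p₃.1 := by
  obtain ⟨-, τ, hτ, -⟩ := h
  simp only [mem_insert, mem_singleton, Prod.ext_iff] at hτ
  tauto

end Matching

theorem stmt_16_general {A : Type*} [DecidableEq A] (K : Set (Finset A)) (hK : IsComplex K)
    (k : ℕ) (p₁ p₂ p₃ : Finset A × Finset A)
    (hidx : p₁.1.card = k ∧ p₂.1.card = k ∧ p₃.1.card = k)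
    (h12 : IsAcyclicMatching K {p₁, p₂})
    (h13 : IsAcyclicMatching K {p₁, p₃})
    (h23 : IsAcyclicMatching K {p₂, p₃})
    (h123 : ¬ IsAcyclicMatching K {p₁, p₂, p₃}) :
    (p₁.2 ∪ p₂.2 ∪ p₃.2).card = k + 2 ∧
    ∀ x ∈ p₁.2 ∪ p₂.2 ∪ p₃.2, ∀ y ∈ p₁.2 ∪ p₂.2 ∪ p₃.2,
      x ≠ y → ({x, y} : Finset A) ∈ K := by
  have hS := pairwiseCompatible_triple h12 h13 h23
  obtain ⟨σ, hσ⟩ := hS.exists_transGen_self h123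
  have h₁ : p₁ ∈ ({p₁, p₂, p₃} : Finset _) := by simp
  have h₂ : p₂ ∈ ({p₁, p₂, p₃} : Finset _) := by simp
  have h₃ : p₃ ∈ ({p₁, p₂, p₃} : Finset _) := by simp
  rcases hσ.three_cycle_of_self (fun _ _ => gradientStep_triple_source)
      (fun _ _ => hS.gradientStep_asymm) with ⟨s₁, s₂, s₃⟩ | ⟨s₁, s₂, s₃⟩
  · obtain ⟨hcard, hedge⟩ := hS.card_union_and_pair_mem_of_cycle hK h₁ h₂ h₃ hidx s₁ s₂ s₃
    exact ⟨hcard, fun x hx y hy _ => hedge x hx y hy⟩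
  · obtain ⟨hcard, hedge⟩ := hS.card_union_and_pair_mem_of_cycle hK h₁ h₃ h₂
      ⟨hidx.1, hidx.2.2, hidx.2.1⟩ s₁ s₂ s₃
    rw [union_right_comm] at hcard hedge
    exact ⟨hcard, fun x hx y hy _ => hedge x hx y hy⟩

/-- If `{(σ₁,τ₁), (σ₂,τ₂), (σ₃,τ₃)}` is a minimal `f`-cycle of index `k - 1` in `K`
(pairwise compatible but incompatible as a triple), then the subcomplex spanned by
`τ₁, τ₂, τ₃` has exactly `k + 2` vertices and a complete 1-skeleton. -/
theorem stmt_16 {A : Type*} [DecidableEq A] (K : Set (Finset A)) (hK : IsComplex K)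
    (k : ℕ) (hk : 1 ≤ k) (p₁ p₂ p₃ : Finset A × Finset A)
    (hne : p₁ ≠ p₂ ∧ p₁ ≠ p₃ ∧ p₂ ≠ p₃)
    (hidx : p₁.1.card = k ∧ p₂.1.card = k ∧ p₃.1.card = k)
    (h12 : IsAcyclicMatching K {p₁, p₂})
    (h13 : IsAcyclicMatching K {p₁, p₃})
    (h23 : IsAcyclicMatching K {p₂, p₃})
    (h123 : ¬ IsAcyclicMatching K {p₁, p₂, p₃}) :
    (p₁.2 ∪ p₂.2 ∪ p₃.2).card = k + 2 ∧
    ∀ x ∈ p₁.2 ∪ p₂.2 ∪ p₃.2, ∀ y ∈ p₁.2 ∪ p₂.2 ∪ p₃.2,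
      x ≠ y → ({x, y} : Finset A) ∈ K :=
  stmt_16_general K hK k p₁ p₂ p₃ hidx h12 h13 h23 h123
end

section
/- Every cycle e₀, e₁, …, e_r in the 1-skeleton of a simplicial complex K determines exactly two f-cycles of index 0 in 𝔐(K): choosing a vertex v₀ of e₀, the set {(v₀,e₀), (v₁,e₁), …, (v_r,e_r)} with vᵢ ≠ v_{i+1} for all i, and the analogous set starting from the other vertex of e₀; each of these sets of oriented edges is incompatible in 𝔐(K) while every proper subset is compatible. -/
/-! The orientation `S` matches `{v i}` into `e i = {v i, v (i + 1)}`, whose other face is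
`{v (i + 1)}`; so V-paths run once around the cycle and close up, and `S` is not acyclic.
Removing the pair at `i₀` cuts the cycle: the forward distance to `i₀` strictly decreases along
every V-path step. With at least three edges the pairs of `S` are disjoint in the Hasse diagram.
`S'` is the same construction for the reversed cycle `i ↦ v (-i)`. Conversely, in a minimally
incompatible `T` two consecutive edges cannot both point at their common vertex, so a single
backward edge forces all edges backward, and otherwise all point forward. -/

namespace Fin

lemma add_one_ne_self {n : ℕ} (hn : 1 ≤ n) (i : Fin (n + 1)) : i + 1 ≠ i := by
  intro h
  have : (1 : Fin (n + 1)) = 0 := by simpa using h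
  rw [Fin.one_eq_zero_iff] at this
  omega

lemma add_one_add_one_ne_self {n : ℕ} (hn : 2 ≤ n) (i : Fin (n + 1)) : i + 1 + 1 ≠ i := by
  intro h
  rw [add_assoc] at h
  have := congrArg Fin.val (add_eq_left.mp h)
  rw [Fin.val_add, Fin.val_one', Nat.mod_eq_of_lt (by omega : 1 < n + 1), Fin.val_zero,
    Nat.mod_eq_of_lt (by omega : 1 + 1 < n + 1)] at this
  omega

lemma val_sub_add_one_lt {n : ℕ} {i j : Fin (n + 1)} (h : j ≠ i) :
    (i - (j + 1)).val < (i - j).val := by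
  have hij : i - j ≠ 0 := sub_ne_zero.mpr h.symm
  rw [sub_add_eq_sub_sub, Fin.coe_sub_one, if_neg hij]
  have : (i - j).val ≠ 0 := Fin.val_ne_zero_iff.mpr hij
  omega

open Fin.NatCast in
lemma forall_of_imp_add_one {n : ℕ} {P : Fin (n + 1) → Prop} (h : ∀ i, P i → P (i + 1))
    {i : Fin (n + 1)} (hi : P i) (j : Fin (n + 1)) : P j := by
  have hk : ∀ k : ℕ, P (i + (k : Fin (n + 1))) := by
    intro k
    induction k with
    | zero => simpa using hi
    | succ k ih => simpa [Nat.cast_succ, ← add_assoc] using h _ ih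
  simpa using hk (j - i).val

end Fin

namespace Relation

variable {α : Type*} {r : α → α → Prop}

lemma transGen_self_of_cycle {n : ℕ} (g : Fin (n + 1) → α) (h : ∀ i, r (g i) (g (i + 1)))
    (i : Fin (n + 1)) : TransGen r (g i) (g i) :=
  Fin.forall_of_imp_add_one (P := fun j => TransGen r (g i) (g j)) (fun j hj => hj.tail (h j))
    (TransGen.single (h i)) i

lemma not_transGen_self_of_lt_s17 (f : α → ℕ) (h : ∀ a b, r a b → f b < f a) (a : α) :
    ¬ TransGen r a a := fun hr => by
  have := hr.lift f (p := (· > ·)) h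
  rw [transGen_eq_self] at this
  exact lt_irrefl _ this

end Relation

namespace Finset

lemma eq_image_of_forall_mem {ι α β : Type*} [Fintype ι] [DecidableEq α] [DecidableEq β]
    {T : Finset (α × β)} {f : ι → α} {e : ι → β} (hT : ∀ p ∈ T, ∃ i, p.2 = e i)
    (huniq : ∀ p ∈ T, ∀ q ∈ T, p.2 = q.2 → p = q) (hf : ∀ i, (f i, e i) ∈ T) :
    T = univ.image fun i => (f i, e i) := by
  ext p
  simp only [mem_image, mem_univ, true_and]
  constructor
  · intro hp
    obtain ⟨i, hi⟩ := hT p hp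
    exact ⟨i, (huniq p hp _ (hf i) hi).symm⟩
  · rintro ⟨i, rfl⟩
    exact hf i

end Finset

section

variable {A : Type*}

-- One step of a V-path: the relation whose cycles `IsAcyclicMatching` forbids.
def vPathStep (S : Finset (Finset A × Finset A)) (a b : Finset A) : Prop :=
  a ≠ b ∧ ∃ τ, (a, τ) ∈ S ∧ b ⊆ τ ∧ b.card + 1 = τ.card

def IsCoverPair (K : Set (Finset A)) (p : Finset A × Finset A) : Prop :=
  p.1 ∈ K ∧ p.2 ∈ K ∧ p.1 ⊆ p.2 ∧ p.1.card + 1 = p.2.card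

def IsFCycle (K : Set (Finset A)) (S : Finset (Finset A × Finset A)) : Prop :=
  ¬ IsAcyclicMatching K S ∧ ∀ T ⊆ S, T ≠ S → IsAcyclicMatching K T

variable [DecidableEq A]

namespace CycleOrientation

open Finset

variable {n : ℕ} {v : Fin (n + 1) → A}

def orientation (v : Fin (n + 1) → A) : Finset (Finset A × Finset A) :=
  univ.image fun i => (({v i} : Finset A), ({v i, v (i + 1)} : Finset A))

lemma mem_orientation {p : Finset A × Finset A} :
    p ∈ orientation v ↔ ∃ i, p = ({v i}, {v i, v (i + 1)}) := by
  simp only [orientation, mem_image, mem_univ, true_and, eq_comm]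

lemma card_pair_add_one (hn : 1 ≤ n) (hv : Function.Injective v) (i : Fin (n + 1)) :
    ({v i, v (i + 1)} : Finset A).card = 2 :=
  card_pair fun h => Fin.add_one_ne_self hn i (hv h).symm

lemma pair_add_one_injective (hn : 2 ≤ n) (hv : Function.Injective v) :
    Function.Injective fun i => ({v i, v (i + 1)} : Finset A) := by
  intro i j h
  replace h : ({v i, v (i + 1)} : Finset A) = {v j, v (j + 1)} := h
  have hi : v i = v j ∨ v i = v (j + 1) := by
    have : v i ∈ ({v j, v (j + 1)} : Finset A) := h ▸ mem_insert_self _ _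
    simpa using this
  have hi' : v (i + 1) = v j ∨ v (i + 1) = v (j + 1) := by
    have : v (i + 1) ∈ ({v j, v (j + 1)} : Finset A) := h ▸ by simp
    simpa using this
  rcases hi with hi | hi
  · exact hv hi
  exfalso
  rcases hi' with hi' | hi'
  · exact Fin.add_one_add_one_ne_self hn j (by rw [← hv hi, hv hi'])
  · exact Fin.add_one_ne_self (by omega) j (by rw [← hv hi, add_right_cancel (hv hi')])

variable {K : Set (Finset A)}

lemma isCoverPair_of_mem_orientation (hK : IsComplex K) (hn : 1 ≤ n)
    (hv : Function.Injective v) (hedge : ∀ i, ({v i, v (i + 1)} : Finset A) ∈ K)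
    {p : Finset A × Finset A} (hp : p ∈ orientation v) : IsCoverPair K p := by
  obtain ⟨i, rfl⟩ := mem_orientation.mp hp
  refine ⟨hK.2 _ (hedge i) _ (by simp) (singleton_nonempty _), hedge i, by simp, ?_⟩
  rw [card_singleton, card_pair_add_one hn hv]

lemma orientation_pairs_disjoint (hn : 2 ≤ n) (hv : Function.Injective v)
    {p q : Finset A × Finset A} (hp : p ∈ orientation v) (hq : q ∈ orientation v)
    (hpq : p ≠ q) :
    p.1 ≠ q.1 ∧ p.1 ≠ q.2 ∧ p.2 ≠ q.1 ∧ p.2 ≠ q.2 := by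
  obtain ⟨i, rfl⟩ := mem_orientation.mp hp
  obtain ⟨j, rfl⟩ := mem_orientation.mp hq
  have hij : i ≠ j := by rintro rfl; exact hpq rfl
  have hcard : ∀ k l : Fin (n + 1), ({v k} : Finset A) ≠ {v l, v (l + 1)} := fun k l h => by
    simpa [card_pair_add_one (by omega : 1 ≤ n) hv] using congrArg card h
  exact ⟨fun h => hij (hv (singleton_injective h)), hcard i j, (hcard j i).symm,
    (pair_add_one_injective hn hv).ne hij⟩

lemma vPathStep_orientation (hn : 1 ≤ n) (hv : Function.Injective v) (i : Fin (n + 1)) :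
    vPathStep (orientation v) {v i} {v (i + 1)} :=
  ⟨fun h => Fin.add_one_ne_self hn i (hv (singleton_injective h)).symm, _,
    mem_orientation.mpr ⟨i, rfl⟩, by simp, by rw [card_singleton, card_pair_add_one hn hv]⟩

lemma exists_of_vPathStep (hn : 1 ≤ n) (hv : Function.Injective v)
    {T : Finset (Finset A × Finset A)} (hT : T ⊆ orientation v) {a b : Finset A}
    (h : vPathStep T a b) :
    ∃ i, (({v i} : Finset A), ({v i, v (i + 1)} : Finset A)) ∈ T ∧
      a = {v i} ∧ b = {v (i + 1)} := by
  obtain ⟨hab, τ, hτ, hbτ, hcard⟩ := h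
  obtain ⟨i, hi⟩ := mem_orientation.mp (hT hτ)
  obtain ⟨rfl, rfl⟩ := Prod.mk.inj hi
  refine ⟨i, hτ, rfl, ?_⟩
  rw [card_pair_add_one hn hv] at hcard
  obtain ⟨x, rfl⟩ := card_eq_one.mp (by omega : b.card = 1)
  rcases mem_insert.mp (hbτ (mem_singleton_self x)) with rfl | hx
  · exact absurd rfl hab
  · rw [mem_singleton.mp hx]

theorem not_isAcyclicMatching_orientation (hn : 1 ≤ n) (hv : Function.Injective v) :
    ¬ IsAcyclicMatching K (orientation v) := fun h =>
  h.2.2 _ (Relation.transGen_self_of_cycle _ (vPathStep_orientation hn hv) 0)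

theorem isAcyclicMatching_of_ssubset_orientation (hK : IsComplex K) (hn : 2 ≤ n)
    (hv : Function.Injective v) (hedge : ∀ i, ({v i, v (i + 1)} : Finset A) ∈ K)
    {T : Finset (Finset A × Finset A)} (hT : T ⊂ orientation v) : IsAcyclicMatching K T := by
  obtain ⟨p, hpO, hpT⟩ := exists_of_ssubset hT
  obtain ⟨i₀, rfl⟩ := mem_orientation.mp hpO
  refine ⟨fun p hp => isCoverPair_of_mem_orientation hK (by omega) hv hedge (hT.subset hp),
    fun p hp q hq => orientation_pairs_disjoint hn hv (hT.subset hp) (hT.subset hq), ?_⟩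
  have hsing : Function.Injective fun i => ({v i} : Finset A) := singleton_injective.comp hv
  refine Relation.not_transGen_self_of_lt_s17
    (fun σ => (i₀ - Function.invFun (fun i => ({v i} : Finset A)) σ).val) fun a b hab => ?_
  obtain ⟨i, hiT, rfl, rfl⟩ := exists_of_vPathStep (by omega) hv hT.subset hab
  have hi : i ≠ i₀ := by rintro rfl; exact hpT hiT
  simp only [Function.leftInverse_invFun hsing _]
  exact Fin.val_sub_add_one_lt hi

theorem isFCycle_orientation (hK : IsComplex K) (hn : 2 ≤ n) (hv : Function.Injective v)
    (hedge : ∀ i, ({v i, v (i + 1)} : Finset A) ∈ K) : IsFCycle K (orientation v) :=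
  ⟨not_isAcyclicMatching_orientation (by omega) hv, fun _ hT hne =>
    isAcyclicMatching_of_ssubset_orientation hK hn hv hedge (ssubset_of_subset_of_ne hT hne)⟩

lemma orientation_comp_neg :
    orientation (fun i => v (-i)) =
      univ.image fun i => (({v (i + 1)} : Finset A), ({v i, v (i + 1)} : Finset A)) := by
  have h : (fun i => (({v (-i)} : Finset A), ({v (-i), v (-(i + 1))} : Finset A))) =
      (fun i => (({v (i + 1)} : Finset A), ({v i, v (i + 1)} : Finset A))) ∘
        fun i => -(i + 1) := by
    funext i
    simp [pair_comm]
  have hsurj : Function.Surjective fun i : Fin (n + 1) => -(i + 1) :=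
    neg_surjective.comp (add_right_surjective (1 : Fin (n + 1)))
  rw [orientation, h, image_comp, image_univ_of_surjective hsurj]

-- The two pairs form a proper subset of `T` (a third edge exists) with a common source.
lemma not_mem_and_mem_of_forall_isAcyclicMatching (hn : 2 ≤ n) (hv : Function.Injective v)
    {T : Finset (Finset A × Finset A)}
    (hcover : ∀ i, ∃ p ∈ T, p.2 = ({v i, v (i + 1)} : Finset A))
    (hmin : ∀ U ⊆ T, U ≠ T → IsAcyclicMatching K U) (i : Fin (n + 1)) :
    ¬ ((({v (i + 1)} : Finset A), ({v i, v (i + 1)} : Finset A)) ∈ T ∧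
      (({v (i + 1)} : Finset A), ({v (i + 1), v (i + 1 + 1)} : Finset A)) ∈ T) := by
  rintro ⟨hi, hf⟩
  have hedge_inj := pair_add_one_injective hn hv
  have hne : ({v i, v (i + 1)} : Finset A) ≠ {v (i + 1), v (i + 1 + 1)} :=
    hedge_inj.ne (Fin.add_one_ne_self (by omega) i).symm
  have hU : ({(({v (i + 1)} : Finset A), ({v i, v (i + 1)} : Finset A)),
      (({v (i + 1)} : Finset A), ({v (i + 1), v (i + 1 + 1)} : Finset A))} :
        Finset (Finset A × Finset A)) ⊂ T := by
    refine ssubset_of_subset_of_ne (insert_subset hi (singleton_subset_iff.mpr hf))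
      fun hUT => ?_
    obtain ⟨p, hp, hpk⟩ := hcover (i + 1 + 1)
    rw [← hUT, mem_insert, mem_singleton] at hp
    rcases hp with rfl | rfl
    · exact Fin.add_one_add_one_ne_self hn i (hedge_inj hpk).symm
    · exact Fin.add_one_ne_self (by omega) (i + 1) (hedge_inj hpk).symm
  exact ((hmin _ hU.subset hU.ne).2.1 _ (mem_insert_self _ _) _
    (mem_insert_of_mem (mem_singleton_self _)) (by simp [hne])).1 rfl

theorem eq_orientation_or_of_forall_isAcyclicMatching (hn : 2 ≤ n) (hv : Function.Injective v)
    {T : Finset (Finset A × Finset A)}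
    (hT : ∀ p ∈ T, ∃ i, p.2 = ({v i, v (i + 1)} : Finset A) ∧
      (p.1 = ({v i} : Finset A) ∨ p.1 = ({v (i + 1)} : Finset A)))
    (hcover : ∀ i, ∃ p ∈ T, p.2 = ({v i, v (i + 1)} : Finset A))
    (huniq : ∀ p ∈ T, ∀ q ∈ T, p.2 = q.2 → p = q)
    (hmin : ∀ U ⊆ T, U ≠ T → IsAcyclicMatching K U) :
    T = orientation v ∨
      T = univ.image fun i => (({v (i + 1)} : Finset A), ({v i, v (i + 1)} : Finset A)) := by
  have hedge_inj := pair_add_one_injective hn hv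
  have hdir : ∀ i, (({v i} : Finset A), ({v i, v (i + 1)} : Finset A)) ∈ T ∨
      (({v (i + 1)} : Finset A), ({v i, v (i + 1)} : Finset A)) ∈ T := by
    intro i
    obtain ⟨⟨x, e⟩, hp, rfl⟩ := hcover i
    obtain ⟨j, hj, hx⟩ := hT _ hp
    obtain rfl := hedge_inj hj
    rcases hx with rfl | rfl
    exacts [Or.inl hp, Or.inr hp]
  have hback : ∀ i, (({v (i + 1)} : Finset A), ({v i, v (i + 1)} : Finset A)) ∈ T →
      (({v (i + 1 + 1)} : Finset A), ({v (i + 1), v (i + 1 + 1)} : Finset A)) ∈ T :=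
    fun i hi => (hdir (i + 1)).resolve_left fun hf =>
      not_mem_and_mem_of_forall_isAcyclicMatching hn hv hcover hmin i ⟨hi, hf⟩
  have hsnd : ∀ p ∈ T, ∃ i, p.2 = ({v i, v (i + 1)} : Finset A) :=
    fun p hp => (hT p hp).imp fun _ h => h.1
  by_cases hb : ∃ i, (({v (i + 1)} : Finset A), ({v i, v (i + 1)} : Finset A)) ∈ T
  · obtain ⟨i, hi⟩ := hb
    exact Or.inr (eq_image_of_forall_mem hsnd huniq (Fin.forall_of_imp_add_one hback hi))
  · simp only [not_exists] at hb
    exact Or.inl (eq_image_of_forall_mem hsnd huniq fun i => (hdir i).resolve_right (hb i))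

end CycleOrientation

end

/-- A cycle `e₀, …, e_r` in the 1-skeleton of `K` (given by distinct vertices
`v 0, …, v r` with consecutive edges `e_i = {v i, v (i+1)}`, indices mod `r + 1`)
determines exactly two `f`-cycles of index `0` in `𝔐(K)`: the two coherent
orientations `S = {({v i}, e_i)}ᵢ` and `S' = {({v (i+1)}, e_i)}ᵢ`.  Each of them is
incompatible while all proper subsets are compatible, and any minimally incompatible
set of index-0 pairs using each edge `e_i` exactly once equals `S` or `S'`. -/
theorem stmt_17 {A : Type*} [DecidableEq A] (K : Set (Finset A)) (hK : IsComplex K)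
    (r : ℕ) (hr : 2 ≤ r) (v : Fin (r + 1) → A) (hinj : Function.Injective v)
    (hedge : ∀ i : Fin (r + 1), ({v i, v (i + 1)} : Finset A) ∈ K)
    (S S' : Finset (Finset A × Finset A))
    (hS : S = Finset.univ.image
      (fun i : Fin (r + 1) => (({v i} : Finset A), ({v i, v (i + 1)} : Finset A))))
    (hS' : S' = Finset.univ.image
      (fun i : Fin (r + 1) => (({v (i + 1)} : Finset A), ({v i, v (i + 1)} : Finset A)))) :
    (¬ IsAcyclicMatching K S ∧ ∀ T ⊆ S, T ≠ S → IsAcyclicMatching K T) ∧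
    (¬ IsAcyclicMatching K S' ∧ ∀ T ⊆ S', T ≠ S' → IsAcyclicMatching K T) ∧
    (∀ T : Finset (Finset A × Finset A),
      (∀ p ∈ T, ∃ i : Fin (r + 1),
        p.2 = ({v i, v (i + 1)} : Finset A) ∧
          (p.1 = ({v i} : Finset A) ∨ p.1 = ({v (i + 1)} : Finset A))) →
      (∀ i : Fin (r + 1), ∃ p ∈ T, p.2 = ({v i, v (i + 1)} : Finset A)) →
      (∀ p ∈ T, ∀ q ∈ T, p.2 = q.2 → p = q) →
      ¬ IsAcyclicMatching K T →
      (∀ U ⊆ T, U ≠ T → IsAcyclicMatching K U) →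
      T = S ∨ T = S') := by
  have hS'neg : S' = CycleOrientation.orientation fun i => v (-i) :=
    hS'.trans CycleOrientation.orientation_comp_neg.symm
  have hedge_neg : ∀ i, ({v (-i), v (-(i + 1))} : Finset A) ∈ K := fun i => by
    simpa [Finset.pair_comm] using hedge (-(i + 1))
  subst hS hS'neg
  exact ⟨CycleOrientation.isFCycle_orientation hK hr hinj hedge,
    CycleOrientation.isFCycle_orientation hK hr (hinj.comp neg_injective) hedge_neg,
    fun T hT hcover huniq _ hmin => CycleOrientation.orientation_comp_neg (v := v) ▸
      CycleOrientation.eq_orientation_or_of_forall_isAcyclicMatching hr hinj hT hcover huniq hmin⟩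
end
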